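/- arXiv:1410.6467 — 9 statements merged into one kernel-verified Lean document; each statement's English description precedes it below -/
import Mathlib

section
/- Let r ≥ 1 and let J ∈ M_r(ℂ) be the regular nilpotent Jordan block, i.e. J_{i,i+1} = 1 for 1 ≤ i ≤ r−1 and all other entries 0. Then the closure, in the Euclidean topology on M_r(ℂ), of the conjugation orbit {g J g⁻¹ : g ∈ GL_r(ℂ)} is exactly the nilpotent cone {x ∈ M_r(ℂ) : x^r = 0}. -/
/-!
The orbit consists of nilpotent matrices and the nilpotent cone is closed. Conversely, a nilpotent
matrix is conjugate to a strictly upper triangular `T`: build a basis one vector at a time, each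
new vector being mapped into the span of the previous ones. Replacing the vanishing superdiagonal
entries of `T` by `t ≠ 0` gives a strictly upper triangular `N` with `N ^ (r - 1) ≠ 0`. Such an
`N` has a cyclic vector `v`, and in the basis `N ^ (r - 1) v, …, N v, v` it becomes the Jordan
block. Letting `t → 0` puts `T` in the closure of the orbit.
-/

open Module Submodule

namespace Matrix

def IsStrictUpperTriangular {ι R : Type*} [LE ι] [Zero R] (T : Matrix ι ι R) : Prop :=
  ∀ i j, j ≤ i → T i j = 0

def nilpotentJordanBlock (R : Type*) [Zero R] [One R] (n : ℕ) : Matrix (Fin n) (Fin n) R :=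
  of fun i j => if (i : ℕ) + 1 = j then 1 else 0

@[simp]
theorem nilpotentJordanBlock_apply {R : Type*} [Zero R] [One R] {n : ℕ} (i j : Fin n) :
    nilpotentJordanBlock R n i j = if (i : ℕ) + 1 = j then 1 else 0 := rfl

theorem isStrictUpperTriangular_nilpotentJordanBlock {R : Type*} [Zero R] [One R] (n : ℕ) :
    (nilpotentJordanBlock R n).IsStrictUpperTriangular := fun i j hji => by
  simp only [nilpotentJordanBlock_apply, Fin.le_def] at hji ⊢
  exact if_neg (by omega)

namespace IsStrictUpperTriangular

variable {R : Type*} [Semiring R] {n : ℕ} {T : Matrix (Fin n) (Fin n) R}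

theorem pow_apply_eq_zero (hT : T.IsStrictUpperTriangular) (m : ℕ) {i j : Fin n}
    (hij : (j : ℕ) < i + m) : (T ^ m) i j = 0 := by
  induction m generalizing i with
  | zero => exact one_apply_ne fun h => by subst h; omega
  | succ m ih =>
    rw [pow_succ', mul_apply]
    refine Finset.sum_eq_zero fun k _ => ?_
    by_cases hk : k ≤ i
    · rw [hT i k hk, zero_mul]
    · rw [ih (by rw [Fin.le_def] at hk; omega), mul_zero]

theorem pow_eq_zero (hT : T.IsStrictUpperTriangular) : T ^ n = 0 :=
  ext fun _ j => hT.pow_apply_eq_zero n (by omega)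

variable [NoZeroDivisors R] [Nontrivial R]

theorem pow_apply_ne_zero (hT : T.IsStrictUpperTriangular)
    (hsuper : ∀ i j : Fin n, (i : ℕ) + 1 = j → T i j ≠ 0) (m : ℕ) {i j : Fin n}
    (hij : (j : ℕ) = i + m) : (T ^ m) i j ≠ 0 := by
  induction m generalizing i with
  | zero =>
    obtain rfl : i = j := Fin.ext (by omega)
    simp
  | succ m ih =>
    have hi : (i : ℕ) + 1 < n := by omega
    rw [pow_succ', mul_apply, Finset.sum_eq_single ⟨i + 1, hi⟩]
    · exact mul_ne_zero (hsuper _ _ rfl) (ih (by simp only; omega))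
    · intro k _ hk
      by_cases hki : k ≤ i
      · rw [hT i k hki, zero_mul]
      · have hik : (i : ℕ) + 1 ≠ k := fun h => hk (Fin.ext h.symm)
        rw [hT.pow_apply_eq_zero m (by rw [Fin.le_def] at hki; omega), mul_zero]
    · simp

theorem pow_pred_ne_zero (hn : 0 < n) (hT : T.IsStrictUpperTriangular)
    (hsuper : ∀ i j : Fin n, (i : ℕ) + 1 = j → T i j ≠ 0) : T ^ (n - 1) ≠ 0 := fun h =>
  hT.pow_apply_ne_zero hsuper (n - 1) (i := ⟨0, hn⟩) (j := ⟨n - 1, by omega⟩) (by simp)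
    (by rw [h, zero_apply])

end IsStrictUpperTriangular

end Matrix

namespace Module.End

theorem exists_notMem_map_mem_of_isNilpotent {R M : Type*} [Semiring R] [AddCommMonoid M]
    [Module R M] {f : End R M} (hf : IsNilpotent f) {W : Submodule R M} (hW : W ≠ ⊤) :
    ∃ v ∉ W, f v ∈ W := by
  classical
  obtain ⟨u, hu⟩ := SetLike.exists_not_mem_of_ne_top W hW
  obtain ⟨k, hk⟩ := hf
  have hex : ∃ m, (f ^ m) u ∈ W := ⟨k, by simp [hk]⟩
  have hm : Nat.find hex ≠ 0 := fun h => hu (by simpa [h] using Nat.find_spec hex)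
  -- the last iterate of `u` outside `W`
  refine ⟨(f ^ (Nat.find hex - 1)) u, Nat.find_min hex (by omega), ?_⟩
  rw [← mul_apply, ← pow_succ', Nat.sub_add_cancel (Nat.pos_of_ne_zero hm)]
  exact Nat.find_spec hex

variable {K V : Type*} [Field K] [AddCommGroup V] [Module K V] {f : End K V}

theorem exists_linearIndependent_map_mem_span_Iio [FiniteDimensional K V] (hf : IsNilpotent f) :
    ∀ k ≤ finrank K V, ∃ v : Fin k → V,
      LinearIndependent K v ∧ ∀ j, f (v j) ∈ span K (v '' Set.Iio j)
  | 0, _ => ⟨Fin.elim0, linearIndependent_empty_type, fun j => j.elim0⟩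
  | k + 1, hk => by
    obtain ⟨v, hv, hfv⟩ := exists_linearIndependent_map_mem_span_Iio hf k (by omega)
    have hW : span K (Set.range v) ≠ ⊤ := fun h => by
      have := finrank_span_eq_card hv
      rw [h, finrank_top, Fintype.card_fin] at this
      omega
    obtain ⟨u, hu, hfu⟩ := exists_notMem_map_mem_of_isNilpotent hf hW
    refine ⟨Fin.snoc v u, linearIndependent_finSnoc.mpr ⟨hv, hu⟩, Fin.lastCases ?_ fun j => ?_⟩
    · rw [Fin.snoc_last]
      refine span_mono ?_ hfu
      rintro _ ⟨i, rfl⟩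
      exact ⟨i.castSucc, Fin.castSucc_lt_last i, Fin.snoc_castSucc ..⟩
    · rw [Fin.snoc_castSucc]
      refine span_mono ?_ (hfv j)
      rintro _ ⟨i, hi, rfl⟩
      exact ⟨i.castSucc, Fin.castSucc_lt_castSucc_iff.mpr hi, Fin.snoc_castSucc ..⟩

theorem exists_basis_map_mem_span_Iio [FiniteDimensional K V] {n : ℕ} (hV : finrank K V = n)
    (hf : IsNilpotent f) : ∃ b : Basis (Fin n) K V, ∀ j, f (b j) ∈ span K (b '' Set.Iio j) := by
  obtain ⟨v, hv, hfv⟩ := exists_linearIndependent_map_mem_span_Iio hf n hV.ge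
  exact ⟨basisOfLinearIndependentOfCardEqFinrank' v hv (by simp [hV]), by simpa using hfv⟩

theorem linearIndependent_pow_apply {v : V} {n : ℕ} (hn : (f ^ n) v = 0)
    (hv : (f ^ (n - 1)) v ≠ 0) : LinearIndependent K (fun i : Fin n => (f ^ (i : ℕ)) v) := by
  have hvanish : ∀ e, n ≤ e → (f ^ e) v = 0 := fun e he => by
    rw [← pow_sub_mul_pow f he, mul_apply, hn, map_zero]
  refine Fintype.linearIndependent_iff.mpr fun c hc i => ?_
  induction i using WellFoundedLT.induction with | ind i ih
  -- applying `f ^ (n - 1 - i)` kills the terms after `i`, and those before `i` vanish by induction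
  have := congrArg (f ^ (n - 1 - i)) hc
  simp only [map_sum, map_smul, ← mul_apply, ← pow_add, map_zero] at this
  rw [Finset.sum_eq_single i] at this
  · rw [show n - 1 - i + i = n - 1 by omega] at this
    exact (smul_eq_zero.mp this).resolve_right hv
  · intro j _ hji
    rcases lt_or_gt_of_ne hji with hlt | hgt
    · rw [ih j hlt, zero_smul]
    · rw [hvanish _ (by omega), smul_zero]
  · simp

theorem exists_basis_toMatrix_eq_nilpotentJordanBlock [FiniteDimensional K V] {n : ℕ}
    (hV : finrank K V = n) (hfn : f ^ n = 0) (hf : f ^ (n - 1) ≠ 0) :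
    ∃ b : Basis (Fin n) K V, LinearMap.toMatrix b b f = Matrix.nilpotentJordanBlock K n := by
  obtain ⟨v, hv⟩ : ∃ v, (f ^ (n - 1)) v ≠ 0 := by
    by_contra! h
    exact hf (LinearMap.ext h)
  have hli := (linearIndependent_pow_apply (by rw [hfn]; rfl) hv).comp Fin.rev Fin.rev_injective
  let b := basisOfLinearIndependentOfCardEqFinrank' _ hli (by simp [hV])
  have hb : ∀ j : Fin n, b j = (f ^ (n - 1 - j)) v := fun j => by
    simp only [b, coe_basisOfLinearIndependentOfCardEqFinrank', Function.comp_apply, Fin.val_rev]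
    rw [Nat.sub_sub, add_comm]
  refine ⟨b, Matrix.ext fun i j => ?_⟩
  rw [LinearMap.toMatrix_apply, Matrix.nilpotentJordanBlock_apply]
  by_cases hj : (j : ℕ) = 0
  · rw [if_neg (by omega), hb, ← mul_apply, ← pow_succ', show n - 1 - j + 1 = n by omega, hfn]
    simp
  · obtain ⟨j', hj'⟩ : ∃ j' : Fin n, (j' : ℕ) + 1 = j := ⟨⟨j - 1, by omega⟩, by simp; omega⟩
    have hfb : f (b j) = b j' := by
      rw [hb, hb, ← mul_apply, ← pow_succ']
      congr 2
      omega
    rw [hfb, b.repr_self, Finsupp.single_apply]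
    exact if_congr (by rw [Fin.ext_iff]; omega) rfl rfl

end Module.End

theorem Module.Basis.toMatrix_isStrictUpperTriangular {ι R M : Type*} [LinearOrder ι] [Fintype ι]
    [DecidableEq ι] [CommSemiring R] [AddCommMonoid M] [Module R M] (b : Basis ι R M)
    {f : End R M} (hb : ∀ j, f (b j) ∈ span R (b '' Set.Iio j)) :
    (LinearMap.toMatrix b b f).IsStrictUpperTriangular := fun i j hji => by
  rw [LinearMap.toMatrix_apply]
  by_contra h
  exact hji.not_gt (b.mem_span_image.mp (hb j) (Finsupp.mem_support_iff.mpr h))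

theorem Matrix.toMatrix_toLin'_mem_orbit {ι R : Type*} [Fintype ι] [DecidableEq ι]
    [CommSemiring R] (b : Basis ι R (ι → R)) (x : Matrix ι ι R) :
    LinearMap.toMatrix b b (toLin' x) ∈ MulAction.orbit (ConjAct (Matrix ι ι R)ˣ) x := by
  let e := Pi.basisFun R ι
  let g : (Matrix ι ι R)ˣ :=
    ⟨b.toMatrix e, e.toMatrix b, b.toMatrix_mul_toMatrix_flip e, e.toMatrix_mul_toMatrix_flip b⟩
  refine ⟨ConjAct.toConjAct g, ?_⟩
  have := basis_toMatrix_mul_linearMap_toMatrix_mul_basis_toMatrix b e b e (toLin' x)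
  rwa [LinearMap.toMatrix_eq_toMatrix', LinearMap.toMatrix'_toLin'] at this

namespace Matrix

open MulAction Filter Topology

variable {K : Type*} [Field K] {n : ℕ}

theorem mem_orbit_nilpotentJordanBlock {N : Matrix (Fin n) (Fin n) K} (hN : N ^ n = 0)
    (hN' : N ^ (n - 1) ≠ 0) :
    N ∈ orbit (ConjAct (Matrix (Fin n) (Fin n) K)ˣ) (nilpotentJordanBlock K n) := by
  obtain ⟨b, hb⟩ := Module.End.exists_basis_toMatrix_eq_nilpotentJordanBlock (f := toLin' N)
    (finrank_fin_fun K) (by rw [← toLin'_pow, hN, map_zero])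
    (by rwa [← toLin'_pow, Ne, LinearEquiv.map_eq_zero_iff])
  rw [mem_orbit_symm, ← hb]
  exact toMatrix_toLin'_mem_orbit b N

theorem exists_isStrictUpperTriangular_mem_orbit {x : Matrix (Fin n) (Fin n) K}
    (hx : IsNilpotent x) :
    ∃ T ∈ orbit (ConjAct (Matrix (Fin n) (Fin n) K)ˣ) x, T.IsStrictUpperTriangular := by
  obtain ⟨b, hb⟩ := Module.End.exists_basis_map_mem_span_Iio (finrank_fin_fun K)
    (hx.map (toLinAlgEquiv' (R := K)))
  exact ⟨_, toMatrix_toLin'_mem_orbit b x, b.toMatrix_isStrictUpperTriangular hb⟩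

variable {𝕜 : Type*} [NontriviallyNormedField 𝕜]

theorem IsStrictUpperTriangular.mem_closure_orbit_nilpotentJordanBlock (hn : 0 < n)
    {T : Matrix (Fin n) (Fin n) 𝕜} (hT : T.IsStrictUpperTriangular) :
    T ∈ closure (orbit (ConjAct (Matrix (Fin n) (Fin n) 𝕜)ˣ) (nilpotentJordanBlock 𝕜 n)) := by
  classical
  -- `T + t • S` agrees with `T` except on the superdiagonal zeros of `T`, which become `t`
  let S : Matrix (Fin n) (Fin n) 𝕜 :=
    of fun i j => if T i j = 0 then nilpotentJordanBlock 𝕜 n i j else 0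
  have hreg : ∀ t : 𝕜, t ≠ 0 → T + t • S ∈ orbit _ (nilpotentJordanBlock 𝕜 n) := fun t ht => by
    have hTS : (T + t • S).IsStrictUpperTriangular := fun i j hji => by
      simp only [S, add_apply, smul_apply, of_apply, hT i j hji,
        isStrictUpperTriangular_nilpotentJordanBlock n i j hji, ite_self, smul_zero, add_zero]
    have hsuper : ∀ i j : Fin n, (i : ℕ) + 1 = j → (T + t • S) i j ≠ 0 := fun i j hij => by
      by_cases hTij : T i j = 0 <;> simp [S, hTij, hij, ht]
    exact mem_orbit_nilpotentJordanBlock hTS.pow_eq_zero (hTS.pow_pred_ne_zero hn hsuper)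
  have hlim : Tendsto (fun t : 𝕜 => T + t • S) (𝓝[≠] 0) (𝓝 T) := by
    have : Continuous fun t : 𝕜 => T + t • S := by fun_prop
    simpa using (this.tendsto 0).mono_left nhdsWithin_le_nhds
  exact mem_closure_of_tendsto hlim (eventually_mem_nhdsWithin.mono hreg)

theorem closure_orbit_nilpotentJordanBlock (hn : 0 < n) :
    closure (orbit (ConjAct (Matrix (Fin n) (Fin n) 𝕜)ˣ) (nilpotentJordanBlock 𝕜 n)) =
      {x | x ^ n = 0} := by
  refine subset_antisymm (closure_minimal ?_ (isClosed_eq (continuous_pow n) continuous_const)) ?_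
  · rintro _ ⟨g, rfl⟩
    rw [Set.mem_ofPred_eq, ← smul_pow',
      (isStrictUpperTriangular_nilpotentJordanBlock n).pow_eq_zero, ConjAct.units_smul_def,
      mul_zero, zero_mul]
  · intro x hx
    obtain ⟨T, hTx, hT⟩ := exists_isStrictUpperTriangular_mem_orbit ⟨n, hx⟩
    obtain ⟨g, rfl⟩ := mem_orbit_symm.mp hTx
    refine map_mem_closure (continuous_const_smul g)
      (hT.mem_closure_orbit_nilpotentJordanBlock hn) ?_
    rintro _ ⟨h, rfl⟩
    exact ⟨g * h, mul_smul g h _⟩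

end Matrix

/-- The closure (in the Euclidean topology on `M_r(ℂ)`) of the conjugation orbit of the
regular nilpotent Jordan block is the nilpotent cone `{x : x ^ r = 0}`. -/
theorem regular_nilpotent_orbit_closure (r : ℕ) (hr : 1 ≤ r)
    (J : Matrix (Fin r) (Fin r) ℂ)
    (hJ : ∀ i j : Fin r, J i j = if (i : ℕ) + 1 = (j : ℕ) then 1 else 0) :
    closure {x : Matrix (Fin r) (Fin r) ℂ |
        ∃ g : (Matrix (Fin r) (Fin r) ℂ)ˣ,
          x = (g : Matrix (Fin r) (Fin r) ℂ) * J * ((g⁻¹ : (Matrix (Fin r) (Fin r) ℂ)ˣ) : Matrix (Fin r) (Fin r) ℂ)} =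
      {x : Matrix (Fin r) (Fin r) ℂ | x ^ r = 0} := by
  obtain rfl : J = Matrix.nilpotentJordanBlock ℂ r := Matrix.ext hJ
  convert Matrix.closure_orbit_nilpotentJordanBlock (𝕜 := ℂ) hr using 2
  ext x
  exact ⟨fun ⟨g, hg⟩ => ⟨ConjAct.toConjAct g, hg.symm⟩,
    fun ⟨g, hg⟩ => ⟨ConjAct.ofConjAct g, hg.symm⟩⟩
end

section
/- Let N ≥ 0 be an integer and let nx, ny, nu : {0, 1, …, N} → ℤ≥0 be functions of nonnegative integers, not all identically zero. Define A = Σ_{i=0}^N (nx(i) + ny(i) + nu(i)), B = Σ_{i=0}^N (i·nx(i) + (i+1)·ny(i) + i·nu(i)), C = Σ_{i=0}^N ((N+1−i)·(nx(i) + nu(i)) + (N−i)·ny(i)), and D = Σ_{i=0}^N ((N+1−i)·i·(nx(i) + nu(i)) + (N−i)·(i+1)·ny(i)). Then A·D < B·C + A. -/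
open Finset

private lemma chain_cauchy (N : ℕ) (nx ny nu : ℕ → ℕ) :
    (∑ i ∈ range (N + 1), (i * nx i + (i + 1) * ny i + i * nu i)) ^ 2 ≤
      (∑ i ∈ range (N + 1), (nx i + ny i + nu i)) *
        ∑ i ∈ range (N + 1), (i * i * (nx i + nu i) + (i + 1) * (i + 1) * ny i) := by
  have key := Finset.sum_sq_le_sum_mul_sum_of_sq_eq_mul
    (s := range (N + 1) ×ˢ (Finset.univ : Finset (Fin 2)))
    (r := fun p => if p.2 = 0 then p.1 * (nx p.1 + nu p.1) else (p.1 + 1) * ny p.1)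
    (f := fun p => if p.2 = 0 then nx p.1 + nu p.1 else ny p.1)
    (g := fun p => if p.2 = 0 then p.1 * p.1 * (nx p.1 + nu p.1)
      else (p.1 + 1) * (p.1 + 1) * ny p.1)
    (fun _ _ => Nat.zero_le _) (fun _ _ => Nat.zero_le _)
    (fun p _ => by rcases p with ⟨i, k⟩; fin_cases k <;> simp <;> ring)
  simp only [Finset.sum_product, Fin.sum_univ_two] at key
  simp only [if_pos rfl, if_neg (by decide : (1 : Fin 2) ≠ 0)] at key
  calc (∑ i ∈ range (N + 1), (i * nx i + (i + 1) * ny i + i * nu i)) ^ 2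
      = (∑ i ∈ range (N + 1), (i * (nx i + nu i) + (i + 1) * ny i)) ^ 2 := by
        congr 1; exact Finset.sum_congr rfl fun i _ => by ring
    _ ≤ (∑ i ∈ range (N + 1), ((nx i + nu i) + ny i)) *
        ∑ i ∈ range (N + 1), (i * i * (nx i + nu i) + (i + 1) * (i + 1) * ny i) := key
    _ = _ := by congr 1; exact Finset.sum_congr rfl fun i _ => by ring

/-- The combinatorial inequality `A·D < B·C + A` for the coefficient sums appearing in the
proof that there are no anomalous critical sets, where `nx i, ny i, nu i` are the block
sizes at the `i`-th node of a chain in the decomposed star quiver (not all zero). -/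
theorem no_anomalous_critical_sets_inequality (N : ℕ) (nx ny nu : ℕ → ℕ)
    (h : ∃ i ≤ N, nx i + ny i + nu i ≠ 0) :
    (∑ i ∈ Finset.range (N + 1), (nx i + ny i + nu i)) *
        (∑ i ∈ Finset.range (N + 1),
          ((N + 1 - i) * i * (nx i + nu i) + (N - i) * (i + 1) * ny i)) <
      (∑ i ∈ Finset.range (N + 1), (i * nx i + (i + 1) * ny i + i * nu i)) *
          (∑ i ∈ Finset.range (N + 1), ((N + 1 - i) * (nx i + nu i) + (N - i) * ny i)) +
        (∑ i ∈ Finset.range (N + 1), (nx i + ny i + nu i)) := by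
  set A := ∑ i ∈ Finset.range (N + 1), (nx i + ny i + nu i) with hA
  set B := ∑ i ∈ Finset.range (N + 1), (i * nx i + (i + 1) * ny i + i * nu i) with hB
  set C := ∑ i ∈ Finset.range (N + 1),
    ((N + 1 - i) * (nx i + nu i) + (N - i) * ny i) with hC
  set D := ∑ i ∈ Finset.range (N + 1),
    ((N + 1 - i) * i * (nx i + nu i) + (N - i) * (i + 1) * ny i) with hD
  set Q := ∑ i ∈ Finset.range (N + 1),
    (i * i * (nx i + nu i) + (i + 1) * (i + 1) * ny i) with hQ
  -- A is positive
  obtain ⟨i₀, hi₀, hne⟩ := h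
  have hApos : 1 ≤ A := by
    rw [hA]
    calc 1 ≤ nx i₀ + ny i₀ + nu i₀ := Nat.one_le_iff_ne_zero.mpr hne
    _ ≤ _ := Finset.single_le_sum (f := fun i => nx i + ny i + nu i)
        (fun _ _ => Nat.zero_le _) (Finset.mem_range.mpr (Nat.lt_succ_of_le hi₀))
  -- termwise identities
  have hCB : C + B = (N + 1) * A := by
    rw [hC, hB, hA, ← Finset.sum_add_distrib, Finset.mul_sum]
    refine Finset.sum_congr rfl fun i hi => ?_
    have hi' : i ≤ N := by have := Finset.mem_range.mp hi; omega
    zify [hi', Nat.le_succ_of_le hi']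
    ring
  have hDQ : D + Q = (N + 1) * B := by
    rw [hD, hQ, hB, ← Finset.sum_add_distrib, Finset.mul_sum]
    refine Finset.sum_congr rfl fun i hi => ?_
    have hi' : i ≤ N := by have := Finset.mem_range.mp hi; omega
    zify [hi', Nat.le_succ_of_le hi']
    ring
  have hCS : B ^ 2 ≤ A * Q := chain_cauchy N nx ny nu
  -- conclude over ℤ
  zify at hCB hDQ hCS hApos ⊢
  have e1 : (A : ℤ) * D = (N + 1) * (A * B) - A * Q := by linear_combination (A : ℤ) * hDQ
  have e2 : (B : ℤ) * C = (N + 1) * (A * B) - B * B := by linear_combination (B : ℤ) * hCB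
  nlinarith [hCS, hApos, e1, e2]
end

section
/- Let r ≥ 1 and let M be an r × r matrix with entries in the polynomial ring ℂ[z], and suppose the evaluation N = M(0) satisfies N² = 0 and rank(N) ≤ 1. Then z divides Tr(M²) in ℂ[z], and z² divides Tr(M³) in ℂ[z]. -/
/-!
Write `M = N + z • B` with `N = M(0)` constant and `N² = 0`. In the expansion of `Tr(M²)` the only
term without a factor `z` is `Tr(N²) = 0`. In the expansion of `Tr(M³)` the terms with fewer than
two factors `z • B` are `Tr(N³)`, `z Tr(N²B)`, `z Tr(NBN)` and `z Tr(BN²)`, all zero because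
`Tr(NBN) = Tr(N²B)` by cyclicity of the trace.
-/

open Polynomial

namespace Matrix

theorem map_C_eval_zero_add_X_smul_map_divX {m n R : Type*} [Semiring R] (M : Matrix m n R[X]) :
    (M.map (eval 0)).map (C : R →+* R[X]) + (X : R[X]) • M.map divX = M := by
  ext i j
  simp only [add_apply, map_apply, smul_apply, smul_eq_mul, ← coeff_zero_eq_eval_zero]
  rw [add_comm, X_mul_divX_add]

variable {n S : Type*} [Fintype n] [DecidableEq n] [CommRing S]

theorem dvd_trace_sq_add_smul {A : Matrix n n S} (hA : A * A = 0) (x : S) (B : Matrix n n S) :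
    x ∣ trace ((A + x • B) ^ 2) := by
  have expand : (A + x • B) ^ 2 = A * A + x • (A * B + B * A + x • (B * B)) := by
    simp only [sq, add_mul, mul_add, smul_mul_assoc, mul_smul_comm, smul_add, smul_smul]
    module
  rw [expand, hA, zero_add, trace_smul, smul_eq_mul]
  exact dvd_mul_right _ _

theorem sq_dvd_trace_pow_three_add_smul {A : Matrix n n S} (hA : A * A = 0) (x : S)
    (B : Matrix n n S) : x ^ 2 ∣ trace ((A + x • B) ^ 3) := by
  have expand : (A + x • B) ^ 3 = A * A * (A + x • B) + x • (A * B * A + B * (A * A))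
      + x ^ 2 • (A * B * B + B * A * B + B * B * A + x • (B * B * B)) := by
    simp only [pow_succ, pow_zero, one_mul, add_mul, mul_add, smul_mul_assoc, mul_smul_comm,
      smul_add, smul_smul, mul_assoc]
    module
  have hABA : trace (A * B * A) = 0 := by rw [trace_mul_cycle, hA, zero_mul, trace_zero]
  rw [expand, hA, zero_mul, mul_zero, add_zero, zero_add, trace_add, trace_smul, hABA, smul_zero,
    zero_add, trace_smul, smul_eq_mul]
  exact dvd_mul_right _ _

end Matrix

theorem trace_divisibility_min_nilpotent_general (r : ℕ)
    (M : Matrix (Fin r) (Fin r) (Polynomial ℂ))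
    (hsq : (M.map (fun q => q.eval 0)) ^ 2 = 0) :
    (Polynomial.X : Polynomial ℂ) ∣ Matrix.trace (M ^ 2) ∧
      (Polynomial.X : Polynomial ℂ) ^ 2 ∣ Matrix.trace (M ^ 3) := by
  set N := M.map (eval 0)
  have hN : N.map C * N.map C = 0 := by
    rw [← Matrix.map_mul, ← sq, hsq, Matrix.map_zero _ C_0]
  rw [← Matrix.map_C_eval_zero_add_X_smul_map_divX M]
  exact ⟨Matrix.dvd_trace_sq_add_smul hN _ _, Matrix.sq_dvd_trace_pow_three_add_smul hN _ _⟩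

/-- If a polynomial matrix `M ∈ M_r(ℂ[z])` has value at `z = 0` in the closure of the
minimal nilpotent orbit (square-zero of rank at most one), then `z ∣ Tr(M²)` and
`z² ∣ Tr(M³)`. -/
theorem trace_divisibility_min_nilpotent (r : ℕ) (hr : 1 ≤ r)
    (M : Matrix (Fin r) (Fin r) (Polynomial ℂ))
    (hsq : (M.map (fun q => q.eval 0)) ^ 2 = 0)
    (hrk : (M.map (fun q => q.eval 0)).rank ≤ 1) :
    (Polynomial.X : Polynomial ℂ) ∣ Matrix.trace (M ^ 2) ∧
      (Polynomial.X : Polynomial ℂ) ^ 2 ∣ Matrix.trace (M ^ 3) :=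
  trace_divisibility_min_nilpotent_general r M hsq
end

section
/- Let r ≥ 1 and let M be an r × r matrix with entries in ℂ[z] such that N = M(0) satisfies N² = 0 and rank(N) ≤ 1. Write the characteristic polynomial of M as det(X·1_r − M) = X^r + c_1(z) X^{r−1} + … + c_r(z) with c_i ∈ ℂ[z]. Then for every i with 2 ≤ i ≤ r, the coefficient c_i(z) is divisible by z^{⌊(i+1)/2⌋} in ℂ[z]. Equivalently, near a marked point the spectral curve has equation λ^r + Σ_{i=2}^r z^{⌊(i+1)/2⌋} a_i(z) λ^{r−i} = 0 with the a_i polynomial. -/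
/-!
Since `M(0)` has rank at most one, `M = z • D + u vᵀ` for a polynomial matrix `D` and constant
vectors `u, v`. Substituting `X = z Y` in the characteristic polynomial gives
`det (z Y - M) = det (z (Y - D) - u vᵀ)`, and the matrix determinant lemma
`det (A + u vᵀ) = det A + vᵀ adj(A) u`, with `adj (z B) = z ^ (r - 1) adj B`, shows that this is
divisible by `z ^ (r - 1)`. The coefficient of `Y ^ (r - i)` is `z ^ (r - i) c_i`, so
`z ^ (i - 1) ∣ c_i`, and `⌊(i + 1) / 2⌋ ≤ i - 1` for `i ≥ 2`.
-/

open Polynomial Matrix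

theorem Polynomial.coeff_comp_C_mul_X {R : Type*} [CommRing R] (p : R[X]) (z : R) (k : ℕ) :
    (p.comp (C z * X)).coeff k = p.coeff k * z ^ k := by
  induction p using Polynomial.induction_on' with
  | add p q hp hq => simp [add_comp, hp, hq, add_mul]
  | monomial m a =>
    rw [monomial_comp, mul_pow, ← C_pow, ← mul_assoc, ← C_mul, coeff_C_mul_X_pow, coeff_monomial]
    split_ifs with h h' h' <;> simp_all [mul_comm]

theorem Matrix.exists_eq_vecMulVec_of_rank_le_one {K m n : Type*} [Field K] [Fintype m]
    [Fintype n] {A : Matrix m n K} (hA : A.rank ≤ 1) : ∃ u v, A = vecMulVec u v := by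
  classical
  obtain ⟨w, hw⟩ := finrank_le_one_iff.mp hA
  choose c hc using fun b : n => hw ⟨A.mulVecLin (Pi.single b 1), LinearMap.mem_range_self _ _⟩
  refine ⟨w, c, ?_⟩
  ext a b
  have hcol := congr_fun (congr_arg Subtype.val (hc b)) a
  simp only [SetLike.val_smul, Pi.smul_apply, smul_eq_mul, mulVecBilin_apply, mulVec_single,
    MulOpposite.op_one, col_apply, one_smul] at hcol
  simp [vecMulVec_apply, ← hcol, mul_comm]

namespace Matrix

variable {n R : Type*} [Fintype n] [DecidableEq n] [CommRing R]

theorem updateCol_add_vecMulVec_eq_mul {A : Matrix n n R} {a : n} (u : n → R) {w : n → R}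
    (hw : w a = 0) :
    (A + vecMulVec u w).updateCol a u = A.updateCol a u * (1 + vecMulVec (Pi.single a 1) w) := by
  rw [Matrix.mul_add, Matrix.mul_one, mul_vecMulVec, mulVec_single_one]
  ext i j
  by_cases hj : j = a
  · subst hj; simp [vecMulVec_apply, hw]
  · simp [hj, vecMulVec_apply]

/- Add the rank-one term one column at a time: once column `a` is replaced by `u`, the columns
already modified differ from those of `A` by multiples of column `a`, which a column operation
of determinant one removes. -/
theorem det_add_vecMulVec (A : Matrix n n R) (u v : n → R) :
    (A + vecMulVec u v).det = A.det + v ⬝ᵥ cramer A u := by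
  suffices h : ∀ s : Finset n, (A + vecMulVec u (s.piecewise v 0)).det
      = A.det + ∑ j ∈ s, v j * (A.updateCol j u).det by
    simpa [dotProduct, cramer_apply] using h Finset.univ
  intro s
  induction s using Finset.induction_on with
  | empty => simp
  | insert a s ha ih =>
    set B := A + vecMulVec u (s.piecewise v 0)
    have hcol : A + vecMulVec u ((insert a s).piecewise v 0)
        = B.updateCol a (B.col a + v a • u) := by
      ext i j
      by_cases hj : j = a
      · subst hj; simp [B, vecMulVec_apply, ha, mul_comm]
      · simp [B, hj, vecMulVec_apply]
    have hunit : (1 + vecMulVec (Pi.single a (1 : R)) (s.piecewise v 0)).det = 1 := by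
      rw [vecMulVec_eq Unit, det_one_add_replicateCol_mul_replicateRow]
      simp [ha]
    have hself : B.updateCol a (B.col a) = B := updateCol_eq_self B a
    rw [hcol, det_updateCol_add, det_updateCol_smul, updateCol_add_vecMulVec_eq_mul u
      (by simp [ha]), det_mul, hunit, mul_one, Finset.sum_insert ha, hself, ih]
    ring

theorem pow_dvd_det_smul_add_vecMulVec (z : R) (B : Matrix n n R) (u v : n → R) :
    z ^ (Fintype.card n - 1) ∣ (z • B + vecMulVec u v).det := by
  rw [det_add_vecMulVec, det_smul, cramer_smul, LinearMap.smul_apply, dotProduct_smul,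
    smul_eq_mul]
  exact dvd_add (dvd_mul_of_dvd_left (pow_dvd_pow z (Nat.sub_le _ 1)) _) (dvd_mul_right _ _)

theorem charpoly_comp_C_mul_X_of_eq_smul_add_vecMulVec {z : R} {M D : Matrix n n R}
    {u v : n → R} (hM : M = z • D + vecMulVec u v) :
    M.charpoly.comp (C z * X)
      = (C z • charmatrix D + vecMulVec (fun i => C (-u i)) (fun j => C (v j))).det := by
  rw [charpoly, ← coe_compRingHom_apply, RingHom.map_det]
  congr 1
  refine Matrix.ext fun i j => ?_
  by_cases hij : i = j
  · subst hij; simp [hM, vecMulVec_apply]; ring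
  · simp [hM, vecMulVec_apply, charmatrix_apply_ne _ _ _ hij]; ring

theorem pow_dvd_charpoly_coeff_of_eq_smul_add_vecMulVec [IsDomain R] {z : R} (hz : z ≠ 0)
    {M D : Matrix n n R} {u v : n → R} (hM : M = z • D + vecMulVec u v) (k : ℕ) :
    z ^ (Fintype.card n - 1 - k) ∣ M.charpoly.coeff k := by
  obtain hk | hk := le_or_gt k (Fintype.card n - 1)
  swap
  · simp [Nat.sub_eq_zero_of_le hk.le]
  have hscaled : C (z ^ (Fintype.card n - 1)) ∣ M.charpoly.comp (C z * X) := by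
    rw [C_pow, charpoly_comp_C_mul_X_of_eq_smul_add_vecMulVec hM]
    exact pow_dvd_det_smul_add_vecMulVec _ _ _ _
  have hcoeff := (C_dvd_iff_dvd_coeff _ _).mp hscaled k
  rwa [coeff_comp_C_mul_X, ← pow_sub_mul_pow z hk, mul_dvd_mul_iff_right (pow_ne_zero k hz)]
    at hcoeff

end Matrix

theorem charpoly_coeff_vanishing_min_nilpotent_general (r : ℕ)
    (M : Matrix (Fin r) (Fin r) (Polynomial ℂ))
    (hrk : (M.map (fun q => q.eval 0)).rank ≤ 1) :
    ∀ i : ℕ, 2 ≤ i → i ≤ r →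
      (Polynomial.X : Polynomial ℂ) ^ ((i + 1) / 2) ∣ (Matrix.charpoly M).coeff (r - i) := by
  obtain ⟨u, v, huv⟩ := exists_eq_vecMulVec_of_rank_le_one hrk
  have hM : M = (X : ℂ[X]) • M.map divX + vecMulVec (fun a => C (u a)) (fun b => C (v b)) := by
    refine Matrix.ext fun a b => ?_
    have hab := congr_fun (congr_fun huv a) b
    simp only [map_apply, vecMulVec_apply, Matrix.add_apply, Matrix.smul_apply, smul_eq_mul]
      at hab ⊢
    rw [← C_mul, ← hab, ← coeff_zero_eq_eval_zero, X_mul_divX_add]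
  intro i hi hir
  have hdvd := pow_dvd_charpoly_coeff_of_eq_smul_add_vecMulVec X_ne_zero hM (r - i)
  rw [Fintype.card_fin] at hdvd
  exact (pow_dvd_pow X (by omega)).trans hdvd

/-- If a polynomial matrix `M ∈ M_r(ℂ[z])` has value at `z = 0` in the closure of the
minimal nilpotent orbit, then the coefficient `c_i(z)` of `X^{r-i}` in its characteristic
polynomial `det(X·1 - M) = X^r + c_1 X^{r-1} + … + c_r` is divisible by `z^⌊(i+1)/2⌋`
for all `2 ≤ i ≤ r`: the local equation of the spectral curve at a marked point is
`λ^r + Σ_{i=2}^r z^⌊(i+1)/2⌋ a_i(z) λ^{r-i} = 0`. -/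
theorem charpoly_coeff_vanishing_min_nilpotent (r : ℕ) (hr : 1 ≤ r)
    (M : Matrix (Fin r) (Fin r) (Polynomial ℂ))
    (hsq : (M.map (fun q => q.eval 0)) ^ 2 = 0)
    (hrk : (M.map (fun q => q.eval 0)).rank ≤ 1) :
    ∀ i : ℕ, 2 ≤ i → i ≤ r →
      (Polynomial.X : Polynomial ℂ) ^ ((i + 1) / 2) ∣ (Matrix.charpoly M).coeff (r - i) :=
  charpoly_coeff_vanishing_min_nilpotent_general r M hrk
end

section
/- Let n ≥ 1, let p_1, …, p_n be distinct complex numbers, and let φ_1, …, φ_n ∈ M_r(ℂ) satisfy φ_i² = 0 and rank(φ_i) ≤ 1 for each i, and Σ_{i=1}^n φ_i = 0. Set P(z) = Π_{i=1}^n (z − p_i) ∈ ℂ[z] and Φ(z) = Σ_{i=1}^n φ_i · Π_{j≠i} (z − p_j) ∈ M_r(ℂ[z]). Then for k = 2 and k = 3, the polynomial P(z)^{k−1} divides Tr(Φ(z)^k) in ℂ[z], and the quotient Tr(Φ(z)^k)/P(z)^{k−1} has degree at most n − 2k. Equivalently, the rational function Tr(φ(z)^k) for φ(z) = Σ_i φ_i/(z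 − p_i) has at most first-order poles at each p_i, so Tr(φ^k)(dz)^k defines a section of K^k(D) on P¹. -/
open Polynomial Matrix Finset

lemma hmw_entry_degree_mul {r : ℕ} (A B : Matrix (Fin r) (Fin r) (Polynomial ℂ))
    (d₁ d₂ : WithBot ℕ)
    (hA : ∀ a b, (A a b).degree ≤ d₁) (hB : ∀ a b, (B a b).degree ≤ d₂) (a b : Fin r) :
    ((A * B) a b).degree ≤ d₁ + d₂ := by
  rw [Matrix.mul_apply]
  refine (Polynomial.degree_sum_le _ _).trans (Finset.sup_le fun c _ => ?_)
  exact (Polynomial.degree_mul_le _ _).trans (add_le_add (hA a c) (hB c b))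

lemma hmw_dvd2 {r : ℕ} (a b : Polynomial ℂ) (M Ψ : Matrix (Fin r) (Fin r) (Polynomial ℂ))
    (hMM : M * M = 0) :
    b ∣ Matrix.trace ((a • M + b • Ψ) ^ 2) := by
  refine ⟨a * Matrix.trace (M * Ψ) + a * Matrix.trace (Ψ * M) + b * Matrix.trace (Ψ * Ψ), ?_⟩
  simp only [pow_two, add_mul, mul_add, smul_mul_assoc, mul_smul_comm, smul_smul,
    hMM, smul_zero, Matrix.trace_add, Matrix.trace_smul, Matrix.trace_zero, smul_eq_mul]
  ring

lemma hmw_dvd3 {r : ℕ} (a b : Polynomial ℂ) (M Ψ : Matrix (Fin r) (Fin r) (Polynomial ℂ))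
    (hMM : M * M = 0) :
    b ^ 2 ∣ Matrix.trace ((a • M + b • Ψ) ^ 3) := by
  have h1 : ∀ B : Matrix (Fin r) (Fin r) (Polynomial ℂ), M * (M * B) = 0 := fun B => by
    rw [← mul_assoc, hMM, Matrix.zero_mul]
  have h2 : Matrix.trace (M * (Ψ * M)) = 0 := by
    rw [← mul_assoc, Matrix.trace_mul_comm, h1, Matrix.trace_zero]
  refine ⟨a * Matrix.trace (M * (Ψ * Ψ)) + a * Matrix.trace (Ψ * (M * Ψ))
      + a * Matrix.trace (Ψ * (Ψ * M)) + b * Matrix.trace (Ψ * (Ψ * Ψ)), ?_⟩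
  simp only [pow_succ, pow_zero, one_mul, add_mul, mul_add, smul_mul_assoc, mul_smul_comm,
    smul_smul, mul_assoc, hMM, h1, h2, smul_zero, Matrix.mul_zero, Matrix.zero_mul,
    Matrix.trace_add, Matrix.trace_smul, Matrix.trace_zero, smul_eq_mul, add_zero, zero_add,
    mul_zero, zero_mul]
  ring

lemma hmw_decomp {n r : ℕ} (p : Fin n → ℂ) (φ : Fin n → Matrix (Fin r) (Fin r) ℂ) (i : Fin n) :
    (∑ j : Fin n, (∏ l ∈ Finset.univ.erase j, (X - C (p l))) •
        (φ j).map (Polynomial.C : ℂ → Polynomial ℂ))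
      = (∏ l ∈ Finset.univ.erase i, (X - C (p l))) •
          (φ i).map (Polynomial.C : ℂ → Polynomial ℂ)
        + (X - C (p i)) • ∑ j ∈ Finset.univ.erase i,
            (∏ l ∈ (Finset.univ.erase i).erase j, (X - C (p l))) •
              (φ j).map (Polynomial.C : ℂ → Polynomial ℂ) := by
  rw [← Finset.add_sum_erase _ _ (Finset.mem_univ i)]
  congr 1
  rw [Finset.smul_sum]
  refine Finset.sum_congr rfl fun j hj => ?_
  have hij : i ≠ j := fun h => (Finset.ne_of_mem_erase hj) h.symm
  have key : (∏ l ∈ Finset.univ.erase j, (X - C (p l)))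
      = (X - C (p i)) * ∏ l ∈ (Finset.univ.erase i).erase j, (X - C (p l)) := by
    rw [Finset.erase_right_comm]
    exact (Finset.mul_prod_erase _ _ (Finset.mem_erase.mpr ⟨hij, Finset.mem_univ i⟩)).symm
  rw [key, mul_smul]

/-- Well-definedness of the components `Tr(φ²)`, `Tr(φ³)` of the Hitchin map: if the residues
`φ_i` are square-zero of rank at most one and sum to zero, then for `k = 2, 3` the polynomial
`P(z)^{k-1}` divides `Tr(Φ(z)^k)` (where `Φ = P·φ` is the cleared-denominator form of
`φ(z) = Σ_i φ_i/(z - p_i)` and `P(z) = Π_i (z - p_i)`), and the quotient has degree at most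
`n - 2k`; i.e. `Tr(φ^k)(dz)^k` defines a section of `K^k(D)` on `P¹`. -/
theorem hitchin_map_components_well_defined (n r : ℕ) (hn : 1 ≤ n)
    (p : Fin n → ℂ) (hp : Function.Injective p)
    (φ : Fin n → Matrix (Fin r) (Fin r) ℂ)
    (hsq : ∀ i, (φ i) ^ 2 = 0) (hrk : ∀ i, (φ i).rank ≤ 1)
    (hsum : ∑ i : Fin n, φ i = 0)
    (P : Polynomial ℂ)
    (hP : P = ∏ i : Fin n, (Polynomial.X - Polynomial.C (p i)))
    (Φ : Matrix (Fin r) (Fin r) (Polynomial ℂ))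
    (hΦ : Φ = ∑ i : Fin n,
        (∏ j ∈ Finset.univ.erase i, (Polynomial.X - Polynomial.C (p j))) •
          (φ i).map (Polynomial.C : ℂ → Polynomial ℂ)) :
    ∀ k : ℕ, k = 2 ∨ k = 3 →
      ∃ q : Polynomial ℂ,
        Matrix.trace (Φ ^ k) = P ^ (k - 1) * q ∧
          q.degree + (2 * k : ℕ) ≤ (n : WithBot ℕ) := by
  classical
  intro k hk
  have hk0 : k ≠ 0 := by rcases hk with rfl | rfl <;> norm_num
  rcases Nat.lt_or_ge n 2 with h2 | h2
  · -- n = 1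
    have hn1 : n = 1 := by omega
    subst hn1
    have hφ0 : φ 0 = 0 := by simpa using hsum
    have hΦ0 : Φ = 0 := by
      rw [hΦ]
      simp [hφ0]
    refine ⟨0, ?_, ?_⟩
    · rw [hΦ0, zero_pow hk0, Matrix.trace_zero, mul_zero]
    · simp
  -- main case n ≥ 2
  have hMM : ∀ i, ((φ i).map (Polynomial.C : ℂ → Polynomial ℂ)) *
      ((φ i).map (Polynomial.C : ℂ → Polynomial ℂ)) = 0 := by
    intro i
    rw [← Matrix.map_mul, ← pow_two, hsq i]
    simp
  -- degrees of P and the P_i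
  have hPm : P.Monic := by
    rw [hP]; exact monic_prod_of_monic _ _ fun i _ => monic_X_sub_C _
  have hPdeg : P.natDegree = n := by
    rw [hP, Polynomial.natDegree_prod_of_monic _ _ fun i _ => monic_X_sub_C _]
    simp [Polynomial.natDegree_X_sub_C]
  have hPim : ∀ i : Fin n, (∏ j ∈ Finset.univ.erase i, (X - C (p j))).Monic :=
    fun i => monic_prod_of_monic _ _ fun j _ => monic_X_sub_C _
  have hPind : ∀ i : Fin n, (∏ j ∈ Finset.univ.erase i, (X - C (p j))).natDegree = n - 1 := by
    intro i
    rw [Polynomial.natDegree_prod_of_monic _ _ fun j _ => monic_X_sub_C _]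
    simp [Polynomial.natDegree_X_sub_C, Finset.card_erase_of_mem]
  -- entries of Φ have degree ≤ n - 2
  have hΦdeg : ∀ a b, (Φ a b).degree ≤ ((n - 2 : ℕ) : WithBot ℕ) := by
    intro a b
    rw [Polynomial.degree_le_iff_coeff_zero]
    intro m hm
    have hm' : n - 2 < m := by exact_mod_cast hm
    have h0 : ∑ i, φ i a b = 0 := by
      have := congrArg (fun M : Matrix (Fin r) (Fin r) ℂ => M a b) hsum
      simpa [Matrix.sum_apply] using this
    rw [hΦ]
    simp only [Matrix.sum_apply, Matrix.smul_apply, Matrix.map_apply, smul_eq_mul]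
    rw [Polynomial.finset_sum_coeff]
    rcases eq_or_lt_of_le (show n - 1 ≤ m by omega) with he | hl
    · have hc : ∀ i : Fin n, (∏ j ∈ Finset.univ.erase i, (X - C (p j))).coeff m = 1 := by
        intro i
        rw [← he, ← hPind i]
        exact (hPim i).coeff_natDegree
      simp only [Polynomial.coeff_mul_C, hc, one_mul]
      exact h0
    · have hc : ∀ i : Fin n, (∏ j ∈ Finset.univ.erase i, (X - C (p j))).coeff m = 0 := by
        intro i
        exact Polynomial.coeff_eq_zero_of_natDegree_lt (by rw [hPind i]; omega)
      simp [Polynomial.coeff_mul_C, hc]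
  -- degree of the trace
  have hTdeg : (Matrix.trace (Φ ^ k)).degree ≤ ((k * (n - 2) : ℕ) : WithBot ℕ) := by
    have hmul : ∀ a b, ((Φ ^ k) a b).degree ≤ ((k * (n - 2) : ℕ) : WithBot ℕ) := by
      rcases hk with rfl | rfl
      · intro a b
        rw [pow_two]
        refine (hmw_entry_degree_mul Φ Φ _ _ hΦdeg hΦdeg a b).trans ?_
        rw [show ((2 * (n - 2) : ℕ) : WithBot ℕ) = ((n-2 : ℕ) : WithBot ℕ) + ((n-2 : ℕ) : WithBot ℕ) by
          rw [two_mul]; push_cast; ring]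
      · intro a b
        rw [show (3 : ℕ) = 2 + 1 from rfl, pow_succ, pow_two]
        refine (hmw_entry_degree_mul (Φ * Φ) Φ _ _
          (hmw_entry_degree_mul Φ Φ _ _ hΦdeg hΦdeg) hΦdeg a b).trans ?_
        rw [show ((3 * (n - 2) : ℕ) : WithBot ℕ)
            = (((n-2 : ℕ) : WithBot ℕ) + ((n-2 : ℕ) : WithBot ℕ)) + ((n-2 : ℕ) : WithBot ℕ) by
          push_cast; ring]
    unfold Matrix.trace
    refine (Polynomial.degree_sum_le _ _).trans (Finset.sup_le fun a _ => ?_)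
    exact hmul a a
  -- divisibility
  have hdvd : P ^ (k - 1) ∣ Matrix.trace (Φ ^ k) := by
    have hPprod : P ^ (k - 1) = ∏ i : Fin n, (X - C (p i)) ^ (k - 1) := by
      rw [hP, ← Finset.prod_pow]
    rw [hPprod]
    apply Finset.prod_dvd_of_coprime
    · intro i _ j _ hij
      exact ((Polynomial.pairwise_coprime_X_sub_C hp hij).pow)
    · intro i _
      rcases hk with rfl | rfl
      · rw [hΦ, hmw_decomp p φ i]
        simpa using hmw_dvd2 _ _ _ _ (hMM i)
      · rw [hΦ, hmw_decomp p φ i]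
        simpa using hmw_dvd3 _ _ _ _ (hMM i)
  obtain ⟨q, hq⟩ := hdvd
  refine ⟨q, hq, ?_⟩
  by_cases hq0 : q = 0
  · simp [hq0]
  · have hPk0 : P ^ (k - 1) ≠ 0 := pow_ne_zero _ hPm.ne_zero
    have hnd : (Matrix.trace (Φ ^ k)).natDegree = (k - 1) * n + q.natDegree := by
      rw [hq, Polynomial.natDegree_mul hPk0 hq0, Polynomial.natDegree_pow, hPdeg]
    have hle : (Matrix.trace (Φ ^ k)).natDegree ≤ k * (n - 2) :=
      Polynomial.natDegree_le_iff_degree_le.mpr hTdeg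
    have hfin : q.natDegree + 2 * k ≤ n := by
      rcases hk with rfl | rfl <;> omega
    rw [Polynomial.degree_eq_natDegree hq0]
    exact_mod_cast hfin
end

section
/- Let r ≥ 2, set ℓ = ⌈r/2⌉, and let a_2, …, a_r ∈ ℂ[z] be polynomials. Let f = λ^r + Σ_{i=2}^{r} z^{⌊(i+1)/2⌋} a_i(z) λ^{r−i} ∈ ℂ[z, λ], and let A = ℂ[z, λ]/(f). Then in the localization of A away from the image of z, the element (image of λ²)·(image of z)⁻¹, i.e. λ²/z, is integral over A: it satisfies a monic polynomial of degree ℓ with coefficients in (the image of) A. -/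
/-!
Put `ℓ = ⌈r/2⌉` and `e_i = ⌈i/2⌉ = ⌊(i+1)/2⌋`. Multiplying `f` by `λ^(r mod 2)` makes every exponent
of `λ` even except for a factor `λ^(i mod 2)`, and `r - i + r mod 2 = i mod 2 + 2(ℓ - e_i)` gives
`f · λ^(r mod 2) = (λ²)^ℓ + Σ_i a_i λ^(i mod 2) z^(e_i) (λ²)^(ℓ - e_i)`.
The right-hand side is homogeneous of degree `ℓ` in `(z, λ²)`, so it vanishes in `A`, and dividing
it by `z^ℓ` in `A[1/z]` shows that `λ²/z` is a root of
`Y^ℓ + Σ_i a_i λ^(i mod 2) Y^(ℓ - e_i) ∈ A[Y]`, which is monic of degree `ℓ` because `e_i ≥ 1`.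
-/

open Polynomial

namespace Polynomial

variable {R ι : Type*}

theorem degree_sum_C_mul_X_pow_lt [Semiring R] {s : Finset ι} {n : ℕ} (c : ι → R) {d : ι → ℕ}
    (hd : ∀ i ∈ s, d i < n) : (∑ i ∈ s, C (c i) * X ^ d i).degree < (n : WithBot ℕ) := by
  refine (degree_sum_le _ _).trans_lt ((Finset.sup_lt_iff (WithBot.bot_lt_coe n)).2 fun i hi ↦ ?_)
  exact (degree_C_mul_X_pow_le _ _).trans_lt (WithBot.coe_lt_coe.2 (hd i hi))

theorem monic_X_pow_add_sum_C_mul_X_pow [Semiring R] {s : Finset ι} {n : ℕ} (c : ι → R)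
    {d : ι → ℕ} (hd : ∀ i ∈ s, d i < n) : (X ^ n + ∑ i ∈ s, C (c i) * X ^ d i).Monic :=
  monic_X_pow_add (degree_sum_C_mul_X_pow_lt c hd)

theorem natDegree_X_pow_add_sum_C_mul_X_pow [Semiring R] [Nontrivial R] {s : Finset ι} {n : ℕ}
    (c : ι → R) {d : ι → ℕ} (hd : ∀ i ∈ s, d i < n) :
    (X ^ n + ∑ i ∈ s, C (c i) * X ^ d i).natDegree = n := by
  rw [natDegree_add_eq_left_of_degree_lt (by simpa using degree_sum_C_mul_X_pow_lt c hd),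
    natDegree_X_pow]

theorem Monic.nontrivial_quotient_span_singleton [CommRing R] [Nontrivial R] {p : R[X]}
    (hp : p.Monic) (hdeg : p.natDegree ≠ 0) : Nontrivial (R[X] ⧸ Ideal.span {p}) := by
  refine Ideal.Quotient.nontrivial_iff.2 ?_
  rw [Ne, Ideal.span_singleton_eq_top, hp.isUnit_iff]
  rintro rfl
  exact hdeg natDegree_one

theorem aeval_X_pow_add_sum_eq_zero_of_homogeneous [CommSemiring R] {S : Type*} [CommSemiring S]
    [Algebra R S] {z w : R} {t : S} (ht : t * algebraMap R S z = algebraMap R S w)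
    (hz : IsUnit (algebraMap R S z)) {n : ℕ} {s : Finset ι} (c : ι → R) {e : ι → ℕ}
    (he : ∀ i ∈ s, e i ≤ n) (hrel : w ^ n + ∑ i ∈ s, c i * z ^ e i * w ^ (n - e i) = 0) :
    aeval t (X ^ n + ∑ i ∈ s, C (c i) * X ^ (n - e i)) = 0 := by
  refine (hz.pow n).mul_right_eq_zero.1 ?_
  have hterm : ∀ i ∈ s, algebraMap R S z ^ n * aeval t (C (c i) * X ^ (n - e i)) =
      algebraMap R S (c i * z ^ e i * w ^ (n - e i)) := by
    intro i hi
    obtain ⟨k, hk⟩ := Nat.exists_eq_add_of_le (he i hi)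
    simp only [hk, Nat.add_sub_cancel_left, map_mul, map_pow, aeval_C, aeval_X, ← ht]
    ring
  calc algebraMap R S z ^ n * aeval t (X ^ n + ∑ i ∈ s, C (c i) * X ^ (n - e i))
      = algebraMap R S (w ^ n + ∑ i ∈ s, c i * z ^ e i * w ^ (n - e i)) := by
        rw [map_add, map_sum, mul_add, Finset.mul_sum, Finset.sum_congr rfl hterm,
          map_add (algebraMap R S), map_sum (algebraMap R S), map_pow (algebraMap R S) w, ← ht,
          aeval_X_pow]
        ring
    _ = 0 := by rw [hrel, map_zero]

end Polynomial

section SpectralCurve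

variable {R : Type*} [CommSemiring R]

/-- `λ^r + Σ_{i=2}^r z^⌊(i+1)/2⌋ a_i(z) λ^(r-i)`, with `z` the inner and `λ` the outer variable. -/
noncomputable def spectralPoly (r : ℕ) (a : ℕ → R[X]) : R[X][X] :=
  X ^ r + ∑ i ∈ Finset.Icc 2 r, C (X ^ ((i + 1) / 2) * a i) * X ^ (r - i)

theorem spectralPoly_monic (r : ℕ) (a : ℕ → R[X]) : (spectralPoly r a).Monic :=
  monic_X_pow_add_sum_C_mul_X_pow _ fun i hi ↦ by simp only [Finset.mem_Icc] at hi; omega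

theorem natDegree_spectralPoly [Nontrivial R] (r : ℕ) (a : ℕ → R[X]) :
    (spectralPoly r a).natDegree = r :=
  natDegree_X_pow_add_sum_C_mul_X_pow _ fun i hi ↦ by simp only [Finset.mem_Icc] at hi; omega

theorem spectralPoly_mul_X_pow_mod_two (r : ℕ) (a : ℕ → R[X]) :
    spectralPoly r a * X ^ (r % 2) = (X ^ 2) ^ ((r + 1) / 2) + ∑ i ∈ Finset.Icc 2 r,
      C (a i) * X ^ (i % 2) * C (X ^ ((i + 1) / 2)) * (X ^ 2) ^ ((r + 1) / 2 - (i + 1) / 2) := by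
  rw [spectralPoly, add_mul, Finset.sum_mul, ← pow_add, ← pow_mul]
  refine congrArg₂ (· + ·) (congrArg _ (by omega)) (Finset.sum_congr rfl fun i hi ↦ ?_)
  have hexp : r - i + r % 2 = i % 2 + 2 * ((r + 1) / 2 - (i + 1) / 2) := by
    simp only [Finset.mem_Icc] at hi; omega
  rw [mul_assoc, ← pow_add, hexp, pow_add, pow_mul, map_mul]
  ring

end SpectralCurve

/-- Integrality of `λ²/z` on the normalization of a spectral curve near a marked point.
Here `f = λ^r + Σ_{i=2}^r z^⌊(i+1)/2⌋ a_i(z) λ^{r-i}` is the local equation of the spectral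
curve (written in `ℂ[z][λ]`, with `λ` the outer variable), `A = ℂ[z,λ]/(f)` is its local
coordinate ring, and in the localization of `A` away from `z` the element `λ²/z` satisfies
a monic polynomial of degree `ℓ = ⌈r/2⌉` with coefficients in (the image of) `A`. -/
theorem lambda_sq_over_z_integral (r : ℕ) (hr : 2 ≤ r) (a : ℕ → Polynomial ℂ)
    (f : Polynomial (Polynomial ℂ))
    (hf : f = Polynomial.X ^ r +
        ∑ i ∈ Finset.Icc 2 r,
          Polynomial.C (Polynomial.X ^ ((i + 1) / 2) * a i) * Polynomial.X ^ (r - i)) :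
    ∀ t : Localization.Away
        ((Ideal.Quotient.mk (Ideal.span {f})) (Polynomial.C Polynomial.X)),
      t * @algebraMap ((Polynomial (Polynomial ℂ)) ⧸ Ideal.span {f}) _ _ _ OreLocalization.instAlgebra
            ((Ideal.Quotient.mk (Ideal.span {f})) (Polynomial.C Polynomial.X)) =
          @algebraMap ((Polynomial (Polynomial ℂ)) ⧸ Ideal.span {f}) _ _ _ OreLocalization.instAlgebra
            ((Ideal.Quotient.mk (Ideal.span {f})) (Polynomial.X ^ 2)) →
        ∃ q : Polynomial ((Polynomial (Polynomial ℂ)) ⧸ Ideal.span {f}),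
          q.Monic ∧ q.natDegree = (r + 1) / 2 ∧ Polynomial.aeval (R := (Polynomial (Polynomial ℂ)) ⧸ Ideal.span {f}) t q = 0 := by
  obtain rfl : f = spectralPoly r a := hf
  intro t ht
  have := (spectralPoly_monic r a).nontrivial_quotient_span_singleton
    (by rw [natDegree_spectralPoly]; omega)
  have he : ∀ i ∈ Finset.Icc 2 r, 0 < (i + 1) / 2 ∧ (i + 1) / 2 ≤ (r + 1) / 2 := fun i hi ↦ by
    simp only [Finset.mem_Icc] at hi; omega
  refine ⟨X ^ ((r + 1) / 2) + ∑ i ∈ Finset.Icc 2 r,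
      C (Ideal.Quotient.mk _ (C (a i) * X ^ (i % 2))) * X ^ ((r + 1) / 2 - (i + 1) / 2),
    monic_X_pow_add_sum_C_mul_X_pow _ fun i hi ↦ by have := he i hi; omega,
    natDegree_X_pow_add_sum_C_mul_X_pow _ fun i hi ↦ by have := he i hi; omega, ?_⟩
  refine aeval_X_pow_add_sum_eq_zero_of_homogeneous ht (IsLocalization.Away.algebraMap_isUnit _) _
    (fun i hi ↦ (he i hi).2) ?_
  simp only [← map_pow, ← map_mul, ← map_sum, ← map_add]
  rw [← spectralPoly_mul_X_pow_mod_two]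
  exact Ideal.Quotient.eq_zero_iff_mem.2 (Ideal.mul_mem_right _ _ (Ideal.mem_span_singleton_self _))
end

section
/- Let n, r ≥ 1 and let R = ℂ[X_{m,i,j} : 1 ≤ m ≤ n, 1 ≤ i, j ≤ r] be the polynomial ring whose generator X_{m,i,j} represents the (i,j) entry of the m-th residue matrix φ_m. Define the Lie–Poisson bracket {·,·} : R × R → R by {F, G} = Σ_{m=1}^{n} Σ_{i,j,k,l=1}^{r} (∂F/∂X_{m,i,j})·(∂G/∂X_{m,k,l})·(δ_{jk} X_{m,i,l} − δ_{il} X_{m,k,j}), and extend it ℂ[z,w]-bilinearly to polynomials in auxiliary variables z, w. Let p_1, …, p_n be distinct complex numbers, let φ_m ∈ M_r(R) be the matrix with entries (φ_m)_{ij} = X_{m,i,j}, and let Φ(z) = Σ_{m=1}^n φ_m · Π_{j≠m}(z − p_j) ∈ M_r(R[z]). Then for all integers a, b ≥ 1, {Tr(Φ(z)^a), Tr(Φ(w)^b)} = 0 in R[z, w]; equivalently, every coefficient in z of Tr(Φ(z)^a) Poisson-commutes with every coefficient in w of Tr(Φ(w)^b). In particular the components of the Hitchin map h : X^r_n(α)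 → B pairwise Poisson commute. -/
/-
Write `Φ(t) = Σ_m q_m(t) φ_m` with `q_m(t) = ∏_{j ≠ m} (t - p_j)`. The gradient of `Tr Φ(t)^a`
in the block `φ_m` is `a q_m(t) Φ(t)^(a-1)`, so with `A = Φ(z)^(a-1)` and `B = Φ(w)^(b-1)`
the bracket of `Tr Φ(z)^a` and `Tr Φ(w)^b` is `a b Σ_m q_m(z) q_m(w) Tr ((B A - A B) φ_m)`.
With `Q(t) = ∏_j (t - p_j)` one has `(w - z) q_m(z) q_m(w) = Q(w) q_m(z) - Q(z) q_m(w)`, so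
`w - z` times the bracket is `a b (Q(w) Tr ((B A - A B) Φ(z)) - Q(z) Tr ((B A - A B) Φ(w)))`,
which vanishes because `A` commutes with `Φ(z)` and `B` with `Φ(w)`. The bracket is computed in
`R[z][w]` with the derivations extended coefficientwise; there `w - z` is monic, hence not a
zero divisor, and the coefficient of `z^c w^d` of the bracket is the bracket of the coefficients.
-/

open MvPolynomial

/-- The Lie–Poisson bracket on the coordinate ring `R = ℂ[X_{m,i,j}]` of `n` copies of
`gl_r*`: `{F, G} = Σ_{m,i,j,k,l} (∂F/∂X_{m,i,j})(∂G/∂X_{m,k,l})(δ_{jk} X_{m,i,l} - δ_{il} X_{m,k,j})`. -/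
noncomputable def liePoissonBracket (n r : ℕ)
    (F G : MvPolynomial (Fin n × Fin r × Fin r) ℂ) :
    MvPolynomial (Fin n × Fin r × Fin r) ℂ :=
  ∑ m : Fin n, ∑ i : Fin r, ∑ j : Fin r, ∑ k : Fin r, ∑ l : Fin r,
    pderiv (m, i, j) F * pderiv (m, k, l) G *
      ((if j = k then X (m, i, l) else 0) - (if i = l then X (m, k, j) else 0))

open Finset

namespace Derivation

variable {K A : Type*} [CommRing K] [CommRing A] [Algebra K A] (D : Derivation K A A)

section Matrix

variable {N : Type*}

theorem map_matrix_mul [Fintype N] (M P : Matrix N N A) :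
    (M * P).map D = M.map D * P + M * P.map D := by
  ext i j
  simp only [Matrix.map_apply, Matrix.mul_apply, Matrix.add_apply, map_sum, leibniz,
    smul_eq_mul, ← sum_add_distrib]
  exact sum_congr rfl fun k _ => by ring

theorem map_matrix_one [DecidableEq N] : (1 : Matrix N N A).map D = 0 := by
  ext i j
  by_cases h : i = j <;> simp [h]

theorem map_matrix_pow [Fintype N] [DecidableEq N] (M : Matrix N N A) (k : ℕ) :
    (M ^ k).map D = ∑ i ∈ range k, M ^ i * M.map D * M ^ (k - 1 - i) := by
  induction k with
  | zero => simp [map_matrix_one]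
  | succ k ih =>
    rw [pow_succ, map_matrix_mul, ih, sum_range_succ, sum_mul, Nat.add_sub_cancel, Nat.sub_self,
      pow_zero, mul_one]
    congr 1
    refine sum_congr rfl fun i hi => ?_
    rw [mul_assoc, ← pow_succ, show k - 1 - i + 1 = k - i by have := mem_range.mp hi; omega]

theorem map_trace_pow [Fintype N] [DecidableEq N] (M : Matrix N N A) (k : ℕ) :
    D (M ^ k).trace = k • (M ^ (k - 1) * M.map D).trace := by
  rw [AddMonoidHom.map_trace D, map_matrix_pow, Matrix.trace_sum, ← card_range k, ← sum_const,
    card_range]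
  refine sum_congr rfl fun i hi => ?_
  rw [Matrix.trace_mul_cycle, ← pow_add,
    show k - 1 - i + i = k - 1 by have := mem_range.mp hi; omega]

end Matrix

open scoped Polynomial

noncomputable def mapCoeffsSelf : Derivation K A[X] A[X] :=
  (PolynomialModule.equivPolynomialSelf (R := A)).toLinearMap.compDer D.mapCoeffs

theorem coeff_mapCoeffsSelf (p : A[X]) (i : ℕ) : (D.mapCoeffsSelf p).coeff i = D (p.coeff i) :=
  rfl

theorem mapCoeffsSelf_C (a : A) : D.mapCoeffsSelf (Polynomial.C a) = Polynomial.C (D a) := by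
  ext i
  simp [coeff_mapCoeffsSelf, Polynomial.coeff_C, apply_ite D]

theorem mapCoeffsSelf_X : D.mapCoeffsSelf (Polynomial.X : A[X]) = 0 := by
  ext i
  simp [coeff_mapCoeffsSelf, Polynomial.coeff_X, apply_ite D]

theorem mapCoeffsSelf_mapCoeffsSelf_C_X :
    D.mapCoeffsSelf.mapCoeffsSelf (Polynomial.C (Polynomial.X : A[X])) = 0 := by
  rw [mapCoeffsSelf_C, mapCoeffsSelf_X, map_zero]

theorem mapCoeffsSelf_mapCoeffsSelf_map_C (p : A[X]) :
    D.mapCoeffsSelf.mapCoeffsSelf (p.map Polynomial.C) = (D.mapCoeffsSelf p).map Polynomial.C := by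
  ext i : 1
  simp [coeff_mapCoeffsSelf, mapCoeffsSelf_C]

end Derivation

namespace Matrix

variable {N A : Type*} [Fintype N] [CommRing A]

theorem trace_commutator_mul_eq_zero {M P : Matrix N N A} (h : Commute M P) (B : Matrix N N A) :
    ((B * M - M * B) * P).trace = 0 := by
  rw [sub_mul, trace_sub, Matrix.mul_assoc, h.eq, ← Matrix.mul_assoc, trace_mul_cycle, sub_self]

end Matrix

section LiePoisson

variable {K S : Type*} [CommRing K] [CommRing S] [Algebra K S] {n r : ℕ}
  (D : Fin n × Fin r × Fin r → Derivation K S S) (φ : Fin n → Matrix (Fin r) (Fin r) S)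

noncomputable def liePoissonBracketOf (F G : S) : S :=
  ∑ m : Fin n, ∑ i : Fin r, ∑ j : Fin r, ∑ k : Fin r, ∑ l : Fin r,
    D (m, i, j) F * D (m, k, l) G *
      ((if j = k then φ m i l else 0) - (if i = l then φ m k j else 0))

/-- Transposed, so that the differential of `F` along `φ m` is
`tr (matrixGradient D m F * dφ m)`. -/
def matrixGradient (m : Fin n) (F : S) : Matrix (Fin r) (Fin r) S :=
  Matrix.of fun j i => D (m, i, j) F

theorem liePoissonBracketOf_eq_sum_trace (F G : S) :
    liePoissonBracketOf D φ F G = ∑ m : Fin n,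
      ((matrixGradient D m G * matrixGradient D m F -
        matrixGradient D m F * matrixGradient D m G) * φ m).trace := by
  refine sum_congr rfl fun m _ => ?_
  simp only [Matrix.trace, Matrix.diag, Matrix.mul_apply, Matrix.sub_apply, matrixGradient,
    Matrix.of_apply, mul_sub, sum_sub_distrib, mul_ite, mul_zero]
  simp only [sum_ite_eq, mem_univ, if_true, sum_ite_irrel, sum_const_zero]
  simp only [sub_mul, sum_mul, sum_sub_distrib]
  congr 1
  · exact (sum_congr rfl fun _ _ => sum_comm).trans <| sum_comm.trans <|
      sum_congr rfl fun _ _ => sum_congr rfl fun _ _ => sum_congr rfl fun _ _ => by ring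
  · exact sum_comm.trans <| sum_congr rfl fun _ _ => sum_comm.trans <|
      sum_congr rfl fun _ _ => sum_congr rfl fun _ _ => by ring

variable (p : Fin n → K)

noncomputable def residueWeight (t : S) (m : Fin n) : S :=
  ∏ j ∈ univ.erase m, (t - algebraMap K S (p j))

noncomputable def higgsField (t : S) : Matrix (Fin r) (Fin r) S :=
  ∑ m : Fin n, residueWeight p t m • φ m

theorem sum_residueWeight_mul_trace (t : S) (N : Matrix (Fin r) (Fin r) S) :
    ∑ m : Fin n, residueWeight p t m * (N * φ m).trace = (N * higgsField φ p t).trace := by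
  simp [higgsField, Matrix.mul_sum, Matrix.trace_sum]

theorem sub_mul_residueWeight_mul_residueWeight (z w : S) (m : Fin n) :
    (w - z) * (residueWeight p z m * residueWeight p w m) =
      (∏ j, (w - algebraMap K S (p j))) * residueWeight p z m -
        (∏ j, (z - algebraMap K S (p j))) * residueWeight p w m := by
  rw [← mul_prod_erase univ _ (mem_univ m), ← mul_prod_erase univ (fun j => z - _) (mem_univ m)]
  simp only [residueWeight]
  ring

theorem sub_mul_sum_residueWeight_mul_trace_commutator {z w : S} {A B : Matrix (Fin r) (Fin r) S}
    (hA : Commute A (higgsField φ p z)) (hB : Commute B (higgsField φ p w)) :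
    (w - z) * ∑ m, residueWeight p z m * residueWeight p w m * ((B * A - A * B) * φ m).trace =
      0 := by
  calc (w - z) * ∑ m, residueWeight p z m * residueWeight p w m * ((B * A - A * B) * φ m).trace
      = ∑ m, ((∏ j, (w - algebraMap K S (p j))) * residueWeight p z m -
          (∏ j, (z - algebraMap K S (p j))) * residueWeight p w m) *
            ((B * A - A * B) * φ m).trace := by
        rw [mul_sum]
        exact sum_congr rfl fun m _ => by rw [← sub_mul_residueWeight_mul_residueWeight]; ring
    _ = (∏ j, (w - algebraMap K S (p j))) * ((B * A - A * B) * higgsField φ p z).trace -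
          (∏ j, (z - algebraMap K S (p j))) * ((B * A - A * B) * higgsField φ p w).trace := by
        rw [← sum_residueWeight_mul_trace, ← sum_residueWeight_mul_trace, mul_sum, mul_sum,
          ← sum_sub_distrib]
        exact sum_congr rfl fun m _ => by ring
    _ = 0 := by
        have hBw : ((B * A - A * B) * higgsField φ p w).trace = 0 := by
          rw [← neg_sub, Matrix.neg_mul, Matrix.trace_neg, Matrix.trace_commutator_mul_eq_zero hB,
            neg_zero]
        rw [Matrix.trace_commutator_mul_eq_zero hA, hBw, mul_zero, mul_zero, sub_zero]

variable {D φ}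

theorem map_residueWeight_eq_zero {d : Derivation K S S} {t : S} (ht : d t = 0) (m : Fin n) :
    d (residueWeight p t m) = 0 :=
  prod_induction _ (fun s => d s = 0) (fun a b ha hb => by simp [ha, hb])
    d.map_one_eq_zero fun j _ => by simp [ht]

theorem higgsField_map_derivation
    (hφ : ∀ u m i j, D u (φ m i j) = if u = (m, i, j) then 1 else 0) {t : S}
    (ht : ∀ u, D u t = 0) (m : Fin n) (i j : Fin r) :
    (higgsField φ p t).map (D (m, i, j)) = residueWeight p t m • Matrix.single i j 1 := by
  ext i' j'
  simp only [higgsField, Matrix.map_apply, Matrix.sum_apply, Matrix.smul_apply, smul_eq_mul,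
    map_sum, Derivation.leibniz, map_residueWeight_eq_zero p (ht _), hφ]
  simp [Matrix.single_apply, ite_and]

theorem matrixGradient_trace_higgsField_pow
    (hφ : ∀ u m i j, D u (φ m i j) = if u = (m, i, j) then 1 else 0) {t : S}
    (ht : ∀ u, D u t = 0) (m : Fin n) (a : ℕ) :
    matrixGradient D m (higgsField φ p t ^ a).trace =
      (a * residueWeight p t m) • higgsField φ p t ^ (a - 1) := by
  ext j i
  rw [matrixGradient, Matrix.of_apply, Derivation.map_trace_pow, higgsField_map_derivation p hφ ht,
    Matrix.mul_smul, Matrix.trace_smul, Matrix.trace_mul_single]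
  simp only [nsmul_eq_mul, Matrix.smul_apply, smul_eq_mul, MulOpposite.smul_eq_mul_unop,
    MulOpposite.unop_op, mul_one]
  ring

theorem liePoissonBracketOf_trace_higgsField_pow_eq
    (hφ : ∀ u m i j, D u (φ m i j) = if u = (m, i, j) then 1 else 0) {z w : S}
    (hz : ∀ u, D u z = 0) (hw : ∀ u, D u w = 0) (a b : ℕ) :
    liePoissonBracketOf D φ (higgsField φ p z ^ a).trace (higgsField φ p w ^ b).trace =
      (a * b) * ∑ m, residueWeight p z m * residueWeight p w m *
        ((higgsField φ p w ^ (b - 1) * higgsField φ p z ^ (a - 1) -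
          higgsField φ p z ^ (a - 1) * higgsField φ p w ^ (b - 1)) * φ m).trace := by
  rw [liePoissonBracketOf_eq_sum_trace, mul_sum]
  refine sum_congr rfl fun m _ => ?_
  rw [matrixGradient_trace_higgsField_pow p hφ hz, matrixGradient_trace_higgsField_pow p hφ hw,
    smul_mul_smul, smul_mul_smul, mul_comm ((b : S) * _), ← smul_sub, Matrix.smul_mul,
    Matrix.trace_smul, smul_eq_mul]
  ring

theorem liePoissonBracketOf_trace_higgsField_pow
    (hφ : ∀ u m i j, D u (φ m i j) = if u = (m, i, j) then 1 else 0) {z w : S}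
    (hz : ∀ u, D u z = 0) (hw : ∀ u, D u w = 0) (hzw : IsLeftRegular (w - z)) (a b : ℕ) :
    liePoissonBracketOf D φ (higgsField φ p z ^ a).trace (higgsField φ p w ^ b).trace = 0 := by
  have hsum := sub_mul_sum_residueWeight_mul_trace_commutator φ p
    ((Commute.refl (higgsField φ p z)).pow_left (a - 1))
    ((Commute.refl (higgsField φ p w)).pow_left (b - 1))
  rw [liePoissonBracketOf_trace_higgsField_pow_eq p hφ hz hw,
    hzw (hsum.trans (mul_zero _).symm), mul_zero]

end LiePoisson

section Hitchin

open scoped Polynomial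

variable {K A : Type*} [CommRing K] [CommRing A] [Algebra K A] {n r : ℕ}
  {D : Fin n × Fin r × Fin r → Derivation K A A} {φ : Fin n → Matrix (Fin r) (Fin r) A}

theorem coeff_coeff_liePoissonBracketOf_C_map_C (F G : A[X]) (c d : ℕ) :
    ((liePoissonBracketOf (fun u => (D u).mapCoeffsSelf.mapCoeffsSelf)
      (fun m => (φ m).map (fun x => Polynomial.C (Polynomial.C x)))
      (Polynomial.C F) (G.map Polynomial.C)).coeff d).coeff c =
        liePoissonBracketOf D φ (F.coeff c) (G.coeff d) := by
  have hcoord : ∀ (i j k l : Fin r) (x y : A),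
      (if j = k then Polynomial.C (Polynomial.C x) else 0) -
        (if i = l then Polynomial.C (Polynomial.C y) else 0) =
        (Polynomial.C (Polynomial.C ((if j = k then x else 0) - (if i = l then y else 0))) :
          A[X][X]) := by
    intros; split_ifs <;> simp
  have hcoeff : ∀ (a g : A[X]) y,
      ((Polynomial.C a * g.map Polynomial.C * Polynomial.C (Polynomial.C y)).coeff d).coeff c =
        a.coeff c * g.coeff d * y := by
    intros; simp [Polynomial.coeff_mul_C, Polynomial.coeff_C_mul]
  simp only [liePoissonBracketOf, Matrix.map_apply,
    Derivation.mapCoeffsSelf_C, Derivation.mapCoeffsSelf_mapCoeffsSelf_map_C,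
    Polynomial.finsetSum_coeff, hcoord, hcoeff, Derivation.coeff_mapCoeffsSelf]

theorem mapCoeffsSelf_mapCoeffsSelf_map_C_C
    (hφ : ∀ u m i j, D u (φ m i j) = if u = (m, i, j) then 1 else 0)
    (u : Fin n × Fin r × Fin r) (m : Fin n) (i j : Fin r) :
    (D u).mapCoeffsSelf.mapCoeffsSelf ((φ m).map (fun x => Polynomial.C (Polynomial.C x)) i j) =
      if u = (m, i, j) then 1 else 0 := by
  simp [Derivation.mapCoeffsSelf_C, hφ, apply_ite Polynomial.C]

variable (p : Fin n → K) {Φ : Matrix (Fin r) (Fin r) A[X]}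

theorem map_C_eq_higgsField
    (hΦ : Φ = ∑ m : Fin n, (∏ j ∈ Finset.univ.erase m,
      (Polynomial.X - Polynomial.C (algebraMap K A (p j)))) • (φ m).map Polynomial.C) :
    Φ.map Polynomial.C =
      higgsField (fun m => (φ m).map (fun x => Polynomial.C (Polynomial.C x))) p
        (Polynomial.C Polynomial.X) := by
  refine Matrix.ext fun i j => ?_
  simp [hΦ, higgsField, residueWeight, Polynomial.algebraMap_apply, Matrix.sum_apply, map_prod]

theorem map_mapRingHom_C_eq_higgsField
    (hΦ : Φ = ∑ m : Fin n, (∏ j ∈ Finset.univ.erase m,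
      (Polynomial.X - Polynomial.C (algebraMap K A (p j)))) • (φ m).map Polynomial.C) :
    Φ.map (Polynomial.mapRingHom Polynomial.C) =
      higgsField (fun m => (φ m).map (fun x => Polynomial.C (Polynomial.C x))) p Polynomial.X := by
  refine Matrix.ext fun i j => ?_
  simp only [hΦ, higgsField, residueWeight, Polynomial.algebraMap_apply, Matrix.map_apply,
    Matrix.sum_apply, Matrix.smul_apply, smul_eq_mul, map_sum, map_mul, map_prod, map_sub]
  simp only [Polynomial.coe_mapRingHom, Polynomial.map_X, Polynomial.map_C]

theorem liePoissonBracketOf_coeff_trace_pow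
    (hφ : ∀ u m i j, D u (φ m i j) = if u = (m, i, j) then 1 else 0)
    (hΦ : Φ = ∑ m : Fin n, (∏ j ∈ Finset.univ.erase m,
      (Polynomial.X - Polynomial.C (algebraMap K A (p j)))) • (φ m).map Polynomial.C)
    (a b c d : ℕ) :
    liePoissonBracketOf D φ ((Φ ^ a).trace.coeff c) ((Φ ^ b).trace.coeff d) = 0 := by
  have h := liePoissonBracketOf_trace_higgsField_pow p
    (mapCoeffsSelf_mapCoeffsSelf_map_C_C hφ)
    (fun u => (D u).mapCoeffsSelf_mapCoeffsSelf_C_X) (fun u => (D u).mapCoeffsSelf.mapCoeffsSelf_X)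
    (Polynomial.monic_X_sub_C _).isRegular.left a b
  rw [← map_C_eq_higgsField p hΦ, ← map_mapRingHom_C_eq_higgsField p hΦ, ← Matrix.map_pow,
    ← Matrix.map_pow, ← AddMonoidHom.map_trace, ← AddMonoidHom.map_trace,
    Polynomial.coe_mapRingHom] at h
  rw [← coeff_coeff_liePoissonBracketOf_C_map_C, h, Polynomial.coeff_zero, Polynomial.coeff_zero]

end Hitchin

theorem liePoissonBracket_eq_liePoissonBracketOf {n r : ℕ}
    {φ : Fin n → Matrix (Fin r) (Fin r) (MvPolynomial (Fin n × Fin r × Fin r) ℂ)}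
    (hφ : ∀ m i j, φ m i j = X (m, i, j)) :
    liePoissonBracket n r = liePoissonBracketOf (fun u => pderiv u) φ := by
  funext F G
  simp only [liePoissonBracket, liePoissonBracketOf, hφ]

theorem hitchin_map_components_poisson_commute_general (n r : ℕ)
    (p : Fin n → ℂ)
    (φ : Fin n → Matrix (Fin r) (Fin r) (MvPolynomial (Fin n × Fin r × Fin r) ℂ))
    (hφ : ∀ m i j, φ m i j = X (m, i, j))
    (Φ : Matrix (Fin r) (Fin r) (Polynomial (MvPolynomial (Fin n × Fin r × Fin r) ℂ)))
    (hΦ : Φ = ∑ m : Fin n,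
        (∏ j ∈ Finset.univ.erase m, (Polynomial.X - Polynomial.C (C (p j) : MvPolynomial (Fin n × Fin r × Fin r) ℂ))) •
          (φ m).map (Polynomial.C :
            MvPolynomial (Fin n × Fin r × Fin r) ℂ →
              Polynomial (MvPolynomial (Fin n × Fin r × Fin r) ℂ)))
    (a b : ℕ) :
    ∀ c d : ℕ,
      liePoissonBracket n r ((Matrix.trace (Φ ^ a)).coeff c)
        ((Matrix.trace (Φ ^ b)).coeff d) = 0 := by
  rw [← MvPolynomial.algebraMap_eq] at hΦ
  rw [liePoissonBracket_eq_liePoissonBracketOf hφ]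
  exact liePoissonBracketOf_coeff_trace_pow p
    (fun u m i j => by simp [hφ, pderiv_X, Pi.single_apply, eq_comm]) hΦ a b

/-- The components of the Hitchin map pairwise Poisson commute: for the tautological
cleared-denominator Higgs field `Φ(z) = Σ_m φ_m Π_{j≠m}(z - p_j)` with entries the
generators `X_{m,i,j}` of `R`, every coefficient (in `z`) of `Tr(Φ(z)^a)` Poisson-commutes
with every coefficient (in `w`) of `Tr(Φ(w)^b)`, i.e. `{Tr(Φ(z)^a), Tr(Φ(w)^b)} = 0`. -/
theorem hitchin_map_components_poisson_commute (n r : ℕ) (hn : 1 ≤ n) (hrr : 1 ≤ r)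
    (p : Fin n → ℂ) (hp : Function.Injective p)
    (φ : Fin n → Matrix (Fin r) (Fin r) (MvPolynomial (Fin n × Fin r × Fin r) ℂ))
    (hφ : ∀ m i j, φ m i j = X (m, i, j))
    (Φ : Matrix (Fin r) (Fin r) (Polynomial (MvPolynomial (Fin n × Fin r × Fin r) ℂ)))
    (hΦ : Φ = ∑ m : Fin n,
        (∏ j ∈ Finset.univ.erase m, (Polynomial.X - Polynomial.C (C (p j) : MvPolynomial (Fin n × Fin r × Fin r) ℂ))) •
          (φ m).map (Polynomial.C :
            MvPolynomial (Fin n × Fin r × Fin r) ℂ →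
              Polynomial (MvPolynomial (Fin n × Fin r × Fin r) ℂ)))
    (a b : ℕ) (ha : 1 ≤ a) (hb : 1 ≤ b) :
    ∀ c d : ℕ,
      liePoissonBracket n r ((Matrix.trace (Φ ^ a)).coeff c)
        ((Matrix.trace (Φ ^ b)).coeff d) = 0 :=
  hitchin_map_components_poisson_commute_general n r p φ hφ Φ hΦ a b
end

section
/- With the setup of the Lie–Poisson bracket on R = ℂ[X_{m,i,j}], distinct points p_1, …, p_n, the residue matrices φ_m with entries X_{m,i,j}, P(z) = Π_i (z − p_i), and Φ(z) = Σ_m φ_m · Π_{j≠m}(z − p_j) ∈ M_r(R[z]): every entry of the matrix P(w)·Φ(z) − P(z)·Φ(w) ∈ M_r(R[z,w]) is divisible by (w − z), and if D(z,w) ∈ M_r(R[z,w]) denotes the entrywise quotient, then for all indices i, j, k, l, one has {Φ(z)_{ij}, Φ(w)_{kl}} = δ_{jk}·D(z,w)_{il} − δ_{il}·D(z,w)_{kj} in R[z,w], where the bracket is extended ℂ[z,w]-bilinearly. -/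
open MvPolynomial

/-!
Writing `Φ(z) = Σ_m Q_m(z) φ_m` with `Q_m = Π_{j ≠ m} (z - p_j)` and `P = (z - p_m) Q_m`,
each summand of `P(w)Φ(z) - P(z)Φ(w)` is `(w - p_m - (z - p_m)) Q_m(w) Q_m(z) φ_m`, so
`D(z,w) = Σ_m Q_m(z) Q_m(w) φ_m`. Every coefficient of an entry of `Φ` or `D` is a linear form
`Σ_m a_m X_{m,i,j}`, and the Lie–Poisson bracket of two such forms only pairs the `m`-th
variables with each other, multiplying their weights.
-/

namespace HiggsField

variable {n r : ℕ}

noncomputable def linearForm (a : Fin n → ℂ) (i j : Fin r) :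
    MvPolynomial (Fin n × Fin r × Fin r) ℂ :=
  ∑ m, C (a m) * X (m, i, j)

lemma pderiv_linearForm (a : Fin n → ℂ) (i j : Fin r) (m' : Fin n) (i' j' : Fin r) :
    pderiv (m', i', j') (linearForm a i j) = if i' = i ∧ j' = j then C (a m') else 0 := by
  simp only [linearForm, map_sum, pderiv_C_mul, pderiv_X, Pi.single_apply, Prod.mk.injEq,
    mul_ite, mul_one, mul_zero, ite_and, Finset.sum_ite_eq', Finset.mem_univ, if_true]
  simp [eq_comm]

lemma liePoissonBracket_linearForm (a b : Fin n → ℂ) (i j k l : Fin r) :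
    liePoissonBracket n r (linearForm a i j) (linearForm b k l) =
      (if j = k then linearForm (a * b) i l else 0) -
        (if i = l then linearForm (a * b) k j else 0) := by
  simp only [liePoissonBracket, pderiv_linearForm, ite_and, ite_mul, zero_mul, mul_ite,
    mul_zero, Finset.sum_ite_irrel, Finset.sum_const_zero, Finset.sum_ite_eq', Finset.mem_univ,
    if_true]
  simp only [linearForm, mul_sub, Finset.sum_sub_distrib, mul_ite, mul_zero,
    Finset.sum_ite_irrel, Finset.sum_const_zero, Pi.mul_apply, C_mul]

noncomputable def higgsEntry (q : Fin n → Polynomial ℂ) (i j : Fin r) :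
    Polynomial (MvPolynomial (Fin n × Fin r × Fin r) ℂ) :=
  ∑ m, (q m).map C * Polynomial.C (X (m, i, j))

-- `Σ_m q_m(z) q_m(w) X_{m,i,j}` in `R[z][w]`, where `Polynomial.C` embeds `R[z]` and
-- `map Polynomial.C` substitutes `w` for `z`.
noncomputable def higgsKernel (q : Fin n → Polynomial ℂ) (i j : Fin r) :
    Polynomial (Polynomial (MvPolynomial (Fin n × Fin r × Fin r) ℂ)) :=
  ∑ m, ((q m).map C).map Polynomial.C * Polynomial.C ((q m).map C * Polynomial.C (X (m, i, j)))

lemma coeff_higgsEntry (q : Fin n → Polynomial ℂ) (i j : Fin r) (c : ℕ) :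
    (higgsEntry q i j).coeff c = linearForm (fun m => (q m).coeff c) i j := by
  simp only [higgsEntry, linearForm, Polynomial.finsetSum_coeff, Polynomial.coeff_mul_C,
    Polynomial.coeff_map]

lemma coeff_coeff_higgsKernel (q : Fin n → Polynomial ℂ) (i j : Fin r) (c d : ℕ) :
    ((higgsKernel q i j).coeff d).coeff c =
      linearForm ((fun m => (q m).coeff c) * fun m => (q m).coeff d) i j := by
  simp only [higgsKernel, linearForm, Polynomial.finsetSum_coeff, Polynomial.coeff_mul_C,
    Polynomial.coeff_map, Polynomial.coeff_C_mul, Pi.mul_apply, C_mul]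
  exact Finset.sum_congr rfl fun m _ => by ring

lemma liePoissonBracket_coeff_higgsEntry (q : Fin n → Polynomial ℂ) (i j k l : Fin r)
    (c d : ℕ) :
    liePoissonBracket n r ((higgsEntry q i j).coeff c) ((higgsEntry q k l).coeff d) =
      (((if j = k then higgsKernel q i l else 0) -
        (if i = l then higgsKernel q k j else 0)).coeff d).coeff c := by
  rw [coeff_higgsEntry, coeff_higgsEntry, liePoissonBracket_linearForm]
  split_ifs <;> simp [coeff_coeff_higgsKernel]

-- `f(w) g(z) x - f(z) g(w) x = (w - z) g(w) g(z) x` for `f = (X - a) g`.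
lemma map_C_mul_C_sub_C_mul_map_C_X_sub_C_mul {A : Type*} [CommRing A] (a x : A)
    (g : Polynomial A) :
    ((Polynomial.X - Polynomial.C a) * g).map Polynomial.C * Polynomial.C (g * Polynomial.C x) -
        Polynomial.C ((Polynomial.X - Polynomial.C a) * g) *
          (g * Polynomial.C x).map Polynomial.C =
      (Polynomial.X - Polynomial.C Polynomial.X) *
        (g.map Polynomial.C * Polynomial.C (g * Polynomial.C x)) := by
  simp only [Polynomial.map_mul, Polynomial.map_sub, Polynomial.map_X, Polynomial.map_C,
    map_mul, map_sub]
  ring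

lemma map_C_mul_C_higgsEntry_sub_C_mul_map_C (q : Fin n → Polynomial ℂ) (p : Fin n → ℂ)
    (P : Polynomial (MvPolynomial (Fin n × Fin r × Fin r) ℂ))
    (hP : ∀ m, P = (Polynomial.X - Polynomial.C (C (p m))) * (q m).map C) (i j : Fin r) :
    P.map Polynomial.C * Polynomial.C (higgsEntry q i j) -
        Polynomial.C P * (higgsEntry q i j).map Polynomial.C =
      (Polynomial.X - Polynomial.C Polynomial.X) * higgsKernel q i j := by
  simp only [higgsEntry, higgsKernel, map_sum, Polynomial.map_sum, Finset.mul_sum]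
  rw [← Finset.sum_sub_distrib
    (G := Polynomial (Polynomial (MvPolynomial (Fin n × Fin r × Fin r) ℂ)))]
  refine Finset.sum_congr rfl fun m _ => ?_
  rw [hP m, map_C_mul_C_sub_C_mul_map_C_X_sub_C_mul]

end HiggsField

open HiggsField in
theorem higgs_entries_poisson_bracket_general (n r : ℕ)
    (p : Fin n → ℂ)
    (P : Polynomial (MvPolynomial (Fin n × Fin r × Fin r) ℂ))
    (hP : P = ∏ i : Fin n,
        (Polynomial.X - Polynomial.C (C (p i) : MvPolynomial (Fin n × Fin r × Fin r) ℂ)))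
    (Φ : Matrix (Fin r) (Fin r) (Polynomial (MvPolynomial (Fin n × Fin r × Fin r) ℂ)))
    (hΦ : Φ = ∑ m : Fin n,
        (∏ j ∈ Finset.univ.erase m,
          (Polynomial.X - Polynomial.C (C (p j) : MvPolynomial (Fin n × Fin r × Fin r) ℂ))) •
          Matrix.of (fun i k : Fin r =>
            (Polynomial.C (X (m, i, k)) :
              Polynomial (MvPolynomial (Fin n × Fin r × Fin r) ℂ)))) :
    ∃ D : Matrix (Fin r) (Fin r)
        (Polynomial (Polynomial (MvPolynomial (Fin n × Fin r × Fin r) ℂ))),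
      (∀ i j : Fin r,
          P.map (Polynomial.C) * Polynomial.C (Φ i j) -
              Polynomial.C P * (Φ i j).map (Polynomial.C) =
            (Polynomial.X - Polynomial.C Polynomial.X) * D i j) ∧
        ∀ i j k l : Fin r, ∀ c d : ℕ,
          liePoissonBracket n r ((Φ i j).coeff c) ((Φ k l).coeff d) =
            (((if j = k then D i l else 0) - (if i = l then D k j else 0)).coeff d).coeff c := by
  set q : Fin n → Polynomial ℂ := fun m =>
    ∏ j ∈ Finset.univ.erase m, (Polynomial.X - Polynomial.C (p j))
  have hΦq : ∀ i j, Φ i j = higgsEntry q i j := fun i j => by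
    simp [hΦ, higgsEntry, q, Matrix.sum_apply, Polynomial.map_prod]
  have hPq : ∀ m, P = (Polynomial.X - Polynomial.C (C (p m))) * (q m).map C := fun m => by
    simp only [hP, q, Polynomial.map_prod, Polynomial.map_sub, Polynomial.map_X,
      Polynomial.map_C]
    exact (Finset.mul_prod_erase _ _ (Finset.mem_univ m)).symm
  refine ⟨Matrix.of (higgsKernel q), fun i j => ?_, fun i j k l c d => ?_⟩
  · rw [hΦq]
    exact map_C_mul_C_higgsEntry_sub_C_mul_map_C q p P hPq i j
  · rw [hΦq, hΦq]
    exact liePoissonBracket_coeff_higgsEntry q i j k l c d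

/-- The matrix `Δ(z,w)` encodes the Poisson brackets of the entries of the Higgs field:
in cleared-denominator form, every entry of `P(w)Φ(z) - P(z)Φ(w)` is divisible by `w - z`,
and the entrywise quotient `D(z,w)` satisfies
`{Φ(z)_{ij}, Φ(w)_{kl}} = δ_{jk} D(z,w)_{il} - δ_{il} D(z,w)_{kj}`
(as an identity of coefficients of `z^c w^d`, where bivariate polynomials are represented
as elements of `(R[z])[w]`, the inner variable being `z` and the outer one `w`). -/
theorem higgs_entries_poisson_bracket (n r : ℕ) (hn : 1 ≤ n) (hrr : 1 ≤ r)
    (p : Fin n → ℂ) (hp : Function.Injective p)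
    (P : Polynomial (MvPolynomial (Fin n × Fin r × Fin r) ℂ))
    (hP : P = ∏ i : Fin n,
        (Polynomial.X - Polynomial.C (C (p i) : MvPolynomial (Fin n × Fin r × Fin r) ℂ)))
    (Φ : Matrix (Fin r) (Fin r) (Polynomial (MvPolynomial (Fin n × Fin r × Fin r) ℂ)))
    (hΦ : Φ = ∑ m : Fin n,
        (∏ j ∈ Finset.univ.erase m,
          (Polynomial.X - Polynomial.C (C (p j) : MvPolynomial (Fin n × Fin r × Fin r) ℂ))) •
          Matrix.of (fun i k : Fin r =>
            (Polynomial.C (X (m, i, k)) :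
              Polynomial (MvPolynomial (Fin n × Fin r × Fin r) ℂ)))) :
    ∃ D : Matrix (Fin r) (Fin r)
        (Polynomial (Polynomial (MvPolynomial (Fin n × Fin r × Fin r) ℂ))),
      (∀ i j : Fin r,
          P.map (Polynomial.C) * Polynomial.C (Φ i j) -
              Polynomial.C P * (Φ i j).map (Polynomial.C) =
            (Polynomial.X - Polynomial.C Polynomial.X) * D i j) ∧
        ∀ i j k l : Fin r, ∀ c d : ℕ,
          liePoissonBracket n r ((Φ i j).coeff c) ((Φ k l).coeff d) =
            (((if j = k then D i l else 0) - (if i = l then D k j else 0)).coeff d).coeff c :=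
  higgs_entries_poisson_bracket_general n r p P hP Φ hΦ
end

section
/- Let a, b, c ∈ ℂ[z] and let M(z) ∈ M_4(ℂ[z]) be the matrix with rows (0, 0, 0, z·c), (1, 0, 0, z·b), (0, z, 0, z·a), (0, 0, 1, 0). Then: (1) the characteristic polynomial of M(z) is det(X·1_4 − M(z)) = X⁴ − z·a·X² − z²·b·X − z²·c; (2) the constant-term matrix N = M(0) satisfies N² = 0 and rank(N) = 2. In particular, N does not lie in the closure of the minimal nilpotent orbit of sl_4. -/
/-!
At `z = 0` the field degenerates to `e₁₀ + e₃₂`: the two Jordan blocks `0 ↦ 1 ↦ 0` and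
`2 ↦ 3 ↦ 0` make it square-zero, and after swapping the rows within each block it becomes
`diagonal (1, 0, 1, 0)`, of rank two. The characteristic polynomial is a cofactor expansion
along the first row.
-/

open Polynomial

namespace Matrix

variable {R : Type*}

/-- The shape of the local Higgs field: `t = z`, `(α, β, γ) = (z a, z b, z c)`. -/
def localHiggs [Zero R] [One R] (t α β γ : R) : Matrix (Fin 4) (Fin 4) R :=
  !![0, 0, 0, γ;
     1, 0, 0, β;
     0, t, 0, α;
     0, 0, 1, 0]

theorem charpoly_localHiggs [CommRing R] (t α β γ : R) :
    (localHiggs t α β γ).charpoly = X ^ 4 - C α * X ^ 2 - C (t * β) * X - C (t * γ) := by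
  rw [charpoly, det_succ_row_zero]
  simp [localHiggs, det_fin_three, Fin.sum_univ_succ, charmatrix_apply, Fin.succAbove]
  ring

theorem map_localHiggs {S : Type*} [NonAssocSemiring R] [NonAssocSemiring S] (f : R →+* S)
    (t α β γ : R) : (localHiggs t α β γ).map f = localHiggs (f t) (f α) (f β) (f γ) := by
  ext i j
  fin_cases i <;> fin_cases j <;> simp [localHiggs]

theorem localHiggs_zero_sq [Semiring R] : localHiggs (0 : R) 0 0 0 ^ 2 = 0 := by
  ext i j
  fin_cases i <;> fin_cases j <;> simp [localHiggs, sq, mul_apply, Fin.sum_univ_succ]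

theorem localHiggs_zero_submatrix [Zero R] [One R] :
    (localHiggs (0 : R) 0 0 0).submatrix
        (Equiv.swap 0 1 * Equiv.swap 2 3 : Equiv.Perm (Fin 4)) id = diagonal ![1, 0, 1, 0] := by
  ext i j
  fin_cases i <;> fin_cases j <;> simp [localHiggs, Equiv.swap_apply_def]

theorem rank_localHiggs_zero {K : Type*} [Field K] : (localHiggs (0 : K) 0 0 0).rank = 2 := by
  classical
  rw [← rank_submatrix _ (Equiv.swap 0 1 * Equiv.swap 2 3) (Equiv.refl _), Equiv.coe_refl,
    localHiggs_zero_submatrix, rank_diagonal]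
  simp [Fintype.card_subtype, Finset.filter_insert, Fin.univ_succ]

end Matrix

/-- The local Higgs field recovered from the normalization of the rank-4 spectral curve
`λ⁴ - z a(z) λ² - z² b(z) λ - z² c(z) = 0`: its characteristic polynomial is
`X⁴ - z·a·X² - z²·b·X - z²·c`, and its value at `z = 0` is square-zero of rank two,
hence does not lie in the closure of the minimal nilpotent orbit of `sl₄`. -/
theorem rank_four_local_higgs_field (a b c : Polynomial ℂ)
    (M : Matrix (Fin 4) (Fin 4) (Polynomial ℂ))
    (hM : M = !![0, 0, 0, Polynomial.X * c;
                 1, 0, 0, Polynomial.X * b;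
                 0, Polynomial.X, 0, Polynomial.X * a;
                 0, 0, 1, 0]) :
    Matrix.charpoly M =
        Polynomial.X ^ 4 - Polynomial.C (Polynomial.X * a) * Polynomial.X ^ 2 -
          Polynomial.C ((Polynomial.X : Polynomial ℂ) ^ 2 * b) * Polynomial.X -
          Polynomial.C ((Polynomial.X : Polynomial ℂ) ^ 2 * c) ∧
      (M.map (fun q => q.eval 0)) ^ 2 = 0 ∧ (M.map (fun q => q.eval 0)).rank = 2 := by
  replace hM : M = Matrix.localHiggs X (X * a) (X * b) (X * c) := hM
  have hM₀ : M.map (fun q => q.eval 0) = Matrix.localHiggs 0 0 0 0 := by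
    rw [hM]
    exact (Matrix.map_localHiggs (evalRingHom 0) ..).trans (by simp)
  refine ⟨?_, hM₀ ▸ Matrix.localHiggs_zero_sq, hM₀ ▸ Matrix.rank_localHiggs_zero⟩
  rw [hM, Matrix.charpoly_localHiggs, sq (X : ℂ[X]), mul_assoc, mul_assoc]
end
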